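/- arXiv:2210.12835 — 10 statements merged into one kernel-verified Lean document; each statement's English description precedes it below -/
import Mathlib

section
/- Every torsion-free additive commutative group G admits a total order compatible with addition. -/
/-!
Over the PID `ℤ` a torsion-free group is flat, so `G → ℚ ⊗[ℤ] G` is injective. A choice of basis
identifies the `ℚ`-vector space `ℚ ⊗[ℤ] G` with `ι →₀ ℚ`, and once `ι` is linearly ordered (by the
well-ordering theorem) the lexicographic order on `ι →₀ ℚ` is a total order compatible with
addition. Pull it back to `G`.
-/

open Function

def IsAddRightOrderable (G : Type*) [Add G] : Prop :=
  ∃ r : G → G → Prop, IsStrictTotalOrder G r ∧ ∀ x y a : G, r x y → r (x + a) (y + a)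

namespace IsAddRightOrderable

variable {G H : Type*} [Add G] [Add H]

theorem of_linearOrder [LinearOrder H] [AddRightStrictMono H] : IsAddRightOrderable H :=
  ⟨(· < ·), inferInstance, fun _ _ a h => add_lt_add_left h a⟩

theorem of_injective (f : G →ₙ+ H) (hf : Injective f) (hH : IsAddRightOrderable H) :
    IsAddRightOrderable G := by
  obtain ⟨r, hr, hadd⟩ := hH
  refine ⟨InvImage r f, { InvImage.trichotomous hf with }, fun x y a h => ?_⟩
  simpa only [InvImage, map_add] using hadd _ _ (f a) h

end IsAddRightOrderable

theorem Module.Free.isAddRightOrderable (R V : Type*) [Semiring R] [LinearOrder R]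
    [AddRightStrictMono R] [AddCommMonoid V] [Module R V] [Module.Free R V] :
    IsAddRightOrderable V := by
  let _ : LinearOrder (Module.Free.ChooseBasisIndex R V) := IsWellOrder.linearOrder WellOrderingRel
  let e := (Module.Free.chooseBasis R V).repr.toAddEquiv.trans (toLexAddEquiv _)
  exact .of_injective e.toAddMonoidHom.toAddHom e.injective .of_linearOrder

theorem IsAddRightOrderable.of_isAddTorsionFree (G : Type*) [AddCommGroup G] [IsAddTorsionFree G] :
    IsAddRightOrderable G :=
  .of_injective (TensorProduct.mk ℤ ℚ G 1).toAddMonoidHom.toAddHom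
    (Module.Flat.tensorProduct_mk_injective ℤ G ℚ) (Module.Free.isAddRightOrderable ℚ _)

/-- Every torsion-free additive commutative group admits a total order (strict total order)
compatible with addition. -/
theorem exists_order_of_torsionFree
    {G : Type*} [AddCommGroup G]
    (htf : ∀ n : ℕ, 0 < n → ∀ x : G, n • x = 0 → x = 0) :
    ∃ r : G → G → Prop,
      IsStrictTotalOrder G r ∧ ∀ x y a : G, r x y → r (x + a) (y + a) := by
  have : IsAddTorsionFree G := .of_not_isOfFinAddOrder fun x hx hfin => by
    obtain ⟨n, hn, hnx⟩ := hfin.exists_nsmul_eq_zero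
    exact hx (htf n hn x hnx)
  exact IsAddRightOrderable.of_isAddTorsionFree G
end

section
/- Let ≻ be a total order on ℝⁿ (viewed as Fin n → ℝ) that is compatible with addition and with multiplication by positive real scalars. Then there exists a linear automorphism e of ℝⁿ such that for all a, b ∈ ℝⁿ, a ≻ b if and only if toLex(e a) > toLex(e b); that is, ≻ is the lexicographic order related to some coordinate system on ℝⁿ. -/
private lemma lex_cons_lt {m : ℕ} (a b : ℝ) (x y : Fin m → ℝ) :
    toLex (Fin.cons a x : Fin (m+1) → ℝ) < toLex (Fin.cons b y) ↔
      a < b ∨ (a = b ∧ toLex x < toLex y) := by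
  constructor
  · rintro ⟨i, hji, hi⟩
    rcases Fin.eq_zero_or_eq_succ i with rfl | ⟨j, rfl⟩
    · left; simpa using hi
    · right
      have hab : a = b := by simpa using hji 0 (Fin.succ_pos j)
      refine ⟨hab, ⟨j, fun k hk => ?_, by simpa using hi⟩⟩
      simpa using hji k.succ (by simpa [Fin.succ_lt_succ_iff] using hk)
  · rintro (hab | ⟨rfl, j, hjk, hj⟩)
    · exact ⟨0, fun k hk => absurd hk (by simp), by simpa using hab⟩
    · refine ⟨j.succ, fun k hk => ?_, by simpa using hj⟩
      rcases Fin.eq_zero_or_eq_succ k with rfl | ⟨l, rfl⟩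
      · simp
      · simpa using hjk l (by simpa [Fin.succ_lt_succ_iff] using hk)

/-- Existence of a supporting linear functional for the positive cone. -/
private lemma exists_functional {n : ℕ} (hn : 0 < n)
    (r : (Fin n → ℝ) → (Fin n → ℝ) → Prop)
    (hord : IsStrictTotalOrder (Fin n → ℝ) r)
    (hadd : ∀ x y a : Fin n → ℝ, r x y → r (x + a) (y + a))
    (hsmul : ∀ x y : Fin n → ℝ, ∀ μ : ℝ, 0 < μ → r x y → r (μ • x) (μ • y)) :
    ∃ f : (Fin n → ℝ) →ₗ[ℝ] ℝ, f ≠ 0 ∧ ∀ x, 0 < f x → r x 0 := by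
  haveI := hord
  set P : Set (Fin n → ℝ) := {x | r x 0} with hP
  have hPadd : ∀ {x y}, x ∈ P → y ∈ P → x + y ∈ P := by
    intro x y hx hy
    have := hadd x 0 y hx
    rw [zero_add] at this
    exact _root_.trans this hy
  have hPsmul : ∀ {x} {μ : ℝ}, 0 < μ → x ∈ P → μ • x ∈ P := by
    intro x μ hμ hx
    have := hsmul x 0 μ hμ hx
    rwa [smul_zero] at this
  have hasymm : ∀ {x y}, r x y → ¬ r y x := fun hxy hyx =>
    irrefl _ (_root_.trans hxy hyx)
  have hneg : ∀ {x}, r 0 x → (-x) ∈ P := by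
    intro x hx
    have := hadd 0 x (-x) hx
    rwa [zero_add, add_neg_cancel] at this
  have hmem : ∀ x, x ≠ 0 → x ∈ P ∨ (-x) ∈ P := by
    intro x hx0
    rcases trichotomous_of r x 0 with h | h | h
    · exact Or.inl h
    · exact absurd h hx0
    · exact Or.inr (hneg h)
  have hPnegP : ∀ {x}, x ∈ P → (-x) ∉ P := by
    intro x hx hnx
    have := hadd x 0 (-x) hx
    rw [add_neg_cancel, zero_add] at this
    exact hasymm hnx this
  have hPconv : Convex ℝ P := by
    intro x hx y hy a b ha hb hab
    rcases ha.eq_or_lt with rfl | ha'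
    · rw [zero_add] at hab; subst hab; simpa using hy
    rcases hb.eq_or_lt with rfl | hb'
    · rw [add_zero] at hab; subst hab; simpa using hx
    exact hPadd (hPsmul ha' hx) (hPsmul hb' hy)
  -- find a point outside the closure of P
  have hx₀ : ∃ x₀, x₀ ∉ closure P := by
    by_cases hsp : affineSpan ℝ P = ⊤
    · obtain ⟨b, hb⟩ := (hPconv.interior_nonempty_iff_affineSpan_eq_top).2 hsp
      refine ⟨-b, fun hcl => ?_⟩
      obtain ⟨z, hz1, hz2⟩ := mem_closure_iff.1 hcl (-interior P)
        (isOpen_interior.neg) (Set.neg_mem_neg.2 hb)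
      have hwP : -z ∈ P := interior_subset (Set.mem_neg.1 hz1)
      exact hPnegP hwP (by simpa using hz2)
    · obtain ⟨x₀, hx₀⟩ : ∃ x₀, x₀ ∉ (affineSpan ℝ P : Set (Fin n → ℝ)) := by
        by_contra h
        push_neg at h
        exact hsp ((AffineSubspace.coe_eq_univ_iff _).1 (Set.eq_univ_of_forall h))
      refine ⟨x₀, fun hcl => hx₀ ?_⟩
      have : closure P ⊆ (affineSpan ℝ P : Set (Fin n → ℝ)) :=
        closure_minimal (subset_affineSpan ℝ P) (affineSpan ℝ P).closed_of_finiteDimensional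
      exact this hcl
  obtain ⟨x₀, hx₀⟩ := hx₀
  -- P is nonempty
  have hPne : P.Nonempty := by
    have h1 : (fun _ => (1:ℝ) : Fin n → ℝ) ≠ 0 := by
      intro h
      have := congrFun h ⟨0, hn⟩
      norm_num at this
    rcases hmem _ h1 with h | h
    exacts [⟨_, h⟩, ⟨_, h⟩]
  obtain ⟨f₀, u, hfu, hux₀⟩ :=
    geometric_hahn_banach_closed_point (hPconv.closure) isClosed_closure hx₀
  have hfle : ∀ a ∈ P, f₀ a ≤ 0 := by
    intro a ha
    by_contra h
    push_neg at h
    have ht : (0:ℝ) < (|u| + 1) / f₀ a := by positivity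
    have := hfu _ (subset_closure (hPsmul ht ha))
    rw [map_smul, smul_eq_mul, div_mul_cancel₀ _ (ne_of_gt h)] at this
    have : |u| + 1 < u := this
    have := le_abs_self u
    linarith
  refine ⟨-f₀.toLinearMap, ?_, ?_⟩
  · intro h
    obtain ⟨a, ha⟩ := hPne
    have ha0 : f₀ a = 0 := by
      have := congrFun (congrArg DFunLike.coe h) a
      simpa [neg_eq_zero] using this
    have hx₀0 : f₀ x₀ = 0 := by
      have := congrFun (congrArg DFunLike.coe h) x₀
      simpa [neg_eq_zero] using this
    have h1 := hfu a (subset_closure ha)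
    rw [ha0] at h1
    rw [hx₀0] at hux₀
    linarith
  · intro x hx
    simp only [LinearMap.neg_apply, ContinuousLinearMap.coe_coe, neg_pos] at hx
    rcases eq_or_ne x 0 with rfl | hx0
    · simp at hx
    rcases hmem x hx0 with h | h
    · exact h
    · have := hfle _ h
      rw [map_neg] at this
      linarith

private theorem order_is_lex_aux : ∀ (n : ℕ) (r : (Fin n → ℝ) → (Fin n → ℝ) → Prop),
    IsStrictTotalOrder (Fin n → ℝ) r →
    (∀ x y a : Fin n → ℝ, r x y → r (x + a) (y + a)) →
    (∀ x y : Fin n → ℝ, ∀ μ : ℝ, 0 < μ → r x y → r (μ • x) (μ • y)) →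
    ∃ e : (Fin n → ℝ) ≃ₗ[ℝ] (Fin n → ℝ),
      ∀ a b : Fin n → ℝ, r a b ↔ toLex (e b) < toLex (e a) := by
  intro n
  induction n with
  | zero =>
    intro r hord _ _
    refine ⟨LinearEquiv.refl _ _, fun a b => ?_⟩
    have hab : a = b := Subsingleton.elim a b
    subst hab
    constructor
    · intro h; exact absurd h (by haveI := hord; exact irrefl_of r a)
    · intro h; exact absurd h (lt_irrefl _)
  | succ m ih =>
    intro r hord hadd hsmul
    haveI := hord
    obtain ⟨f, hf0, hfpos⟩ := exists_functional (Nat.succ_pos m) r hord hadd hsmul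
    have hasymm : ∀ {x y}, r x y → ¬ r y x := fun hxy hyx =>
      irrefl _ (_root_.trans hxy hyx)
    -- pick v with f v = 1
    obtain ⟨w, hw⟩ : ∃ w, f w ≠ 0 := by
      by_contra h
      push_neg at h
      exact hf0 (LinearMap.ext fun x => h x)
    set v : Fin (m+1) → ℝ := (f w)⁻¹ • w with hv
    have hfv : f v = 1 := by
      rw [hv, map_smul, smul_eq_mul, inv_mul_cancel₀ hw]
    set K := LinearMap.ker f with hK
    have hrange : LinearMap.range f = ⊤ := by
      rw [LinearMap.range_eq_top]
      intro c
      exact ⟨c • v, by rw [map_smul, hfv, smul_eq_mul, mul_one]⟩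
    have hfinK : Module.finrank ℝ K = m := by
      have h2 := f.finrank_range_add_finrank_ker
      rw [hrange, ← hK] at h2
      simp at h2
      rw [add_comm] at h2
      exact Nat.succ_injective h2
    let φ : K ≃ₗ[ℝ] (Fin m → ℝ) := LinearEquiv.ofFinrankEq _ _ (by simp [hfinK])
    let g : (Fin m → ℝ) →ₗ[ℝ] (Fin (m+1) → ℝ) := K.subtype ∘ₗ φ.symm.toLinearMap
    have hginj : Function.Injective g :=
      K.injective_subtype.comp φ.symm.injective
    have hgker : ∀ t, f (g t) = 0 := fun t => (φ.symm t).2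
    -- the induced order on Fin m → ℝ
    set r' : (Fin m → ℝ) → (Fin m → ℝ) → Prop := fun x y => r (g x) (g y) with hr'
    haveI : IsIrrefl (Fin m → ℝ) r' := ⟨fun x h => irrefl_of r (g x) h⟩
    haveI : IsTrans (Fin m → ℝ) r' := ⟨fun _ _ _ h1 h2 => trans_of r h1 h2⟩
    haveI : IsTrichotomous (Fin m → ℝ) r' := ⟨fun x y h1 h2 => by
      rcases trichotomous_of r (g x) (g y) with h | h | h
      exacts [absurd h h1, hginj h, absurd h h2]⟩
    have hord' : IsStrictTotalOrder (Fin m → ℝ) r' := { }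
    have hadd' : ∀ x y a, r' x y → r' (x + a) (y + a) := by
      intro x y a h
      have := hadd (g x) (g y) (g a) h
      simpa only [hr', map_add] using this
    have hsmul' : ∀ x y : Fin m → ℝ, ∀ μ : ℝ, 0 < μ → r' x y → r' (μ • x) (μ • y) := by
      intro x y μ hμ h
      have := hsmul (g x) (g y) μ hμ h
      simpa only [hr', map_smul] using this
    obtain ⟨e', he'⟩ := ih r' hord' hadd' hsmul'
    -- build the equivalence
    have hπmem : ∀ x : Fin (m+1) → ℝ, x - f x • v ∈ K := by
      intro x
      simp [hK, LinearMap.mem_ker, map_sub, map_smul, hfv]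
    let j : (Fin (m+1) → ℝ) →ₗ[ℝ] K :=
      LinearMap.codRestrict K (LinearMap.id - (LinearMap.smulRight f v)) (fun x => by
        simpa using hπmem x)
    let h : (Fin (m+1) → ℝ) →ₗ[ℝ] (Fin m → ℝ) := e'.toLinearMap ∘ₗ φ.toLinearMap ∘ₗ j
    have hj : ∀ x, (j x : Fin (m+1) → ℝ) = x - f x • v := fun x => rfl
    have hhx : ∀ x, h x = e' (φ (j x)) := fun x => rfl
    let F : (Fin (m+1) → ℝ) → (Fin (m+1) → ℝ) := fun x => Fin.cons (f x) (h x)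
    let G : (Fin (m+1) → ℝ) → (Fin (m+1) → ℝ) :=
      fun y => y 0 • v + g (e'.symm (fun i => y i.succ))
    have hfG : ∀ y, f (G y) = y 0 := by
      intro y
      simp [G, map_add, map_smul, hfv, hgker]
    have hleft : ∀ x, G (F x) = x := by
      intro x
      have h0 : F x 0 = f x := rfl
      have hs : (fun i => F x i.succ) = h x := by
        funext i; simp [F, Fin.cons_succ]
      simp only [G, h0, hs, hhx]
      rw [LinearEquiv.symm_apply_apply]
      have : g (φ (j x)) = (j x : Fin (m+1) → ℝ) := by
        simp [g, LinearEquiv.symm_apply_apply]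
      rw [this, hj]
      abel
    have hright : ∀ y, F (G y) = y := by
      intro y
      funext i
      refine Fin.cases ?_ ?_ i
      · simp [F, Fin.cons_zero, hfG]
      · intro k
        simp only [F, Fin.cons_succ, hhx]
        have hjG : j (G y) = φ.symm (e'.symm (fun i => y i.succ)) := by
          apply Subtype.ext
          rw [hj, hfG]
          simp only [G]
          have : (g (e'.symm (fun i => y i.succ)) : Fin (m+1) → ℝ) =
              (φ.symm (e'.symm (fun i => y i.succ)) : Fin (m+1) → ℝ) := rfl
          rw [this]
          abel
        rw [hjG]
        simp [LinearEquiv.apply_symm_apply]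
    let E : (Fin (m+1) → ℝ) ≃ₗ[ℝ] (Fin (m+1) → ℝ) :=
      { toFun := F
        map_add' := by
          intro x y
          funext i
          refine Fin.cases ?_ ?_ i <;> simp [F, map_add]
        map_smul' := by
          intro c x
          funext i
          refine Fin.cases ?_ ?_ i <;> simp [F, map_smul]
        invFun := G
        left_inv := hleft
        right_inv := hright }
    have hEx : ∀ x, E x = Fin.cons (f x) (h x) := fun _ => rfl
    -- key positivity lemma
    have hzero : (0 : Fin (m+1) → ℝ) = Fin.cons (0:ℝ) (0 : Fin m → ℝ) := by
      funext i; refine Fin.cases ?_ ?_ i <;> simp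
    have hkey : ∀ x : Fin (m+1) → ℝ, r x 0 ↔ toLex (0 : Fin (m+1) → ℝ) < toLex (E x) := by
      intro x
      rw [hEx,
        show toLex (0 : Fin (m+1) → ℝ) = toLex (Fin.cons (0:ℝ) (0 : Fin m → ℝ)) from
          congrArg toLex hzero, lex_cons_lt]
      rcases lt_trichotomy (f x) 0 with hfx | hfx | hfx
      · constructor
        · intro hx
          have h1 : r (-x) 0 := hfpos (-x) (by rw [map_neg]; linarith)
          have h2 := hadd x 0 (-x) hx
          rw [add_neg_cancel, zero_add] at h2
          exact absurd h1 (hasymm h2)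
        · rintro (h | ⟨h, -⟩) <;> [linarith; exact absurd h.symm (ne_of_lt hfx)]
      · -- f x = 0 : x ∈ K
        have hxK : x ∈ K := by rwa [hK, LinearMap.mem_ker]
        have hjx : j x = (⟨x, hxK⟩ : K) := by
          apply Subtype.ext
          rw [hj, hfx, zero_smul, sub_zero]
        have hgx : g (φ (j x)) = x := by
          have : g (φ (j x)) = (j x : Fin (m+1) → ℝ) := by
            simp [g, LinearEquiv.symm_apply_apply]
          rw [this, hjx]
        have hx_iff : r x 0 ↔ r' (φ (j x)) 0 := by
          have h9 : r' (φ (j x)) 0 = r (g (φ (j x))) (g 0) := by rw [hr']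
          rw [h9, hgx, map_zero]
        rw [hx_iff, he']
        rw [map_zero]
        constructor
        · intro hlt
          exact Or.inr ⟨hfx.symm, by rwa [hhx]⟩
        · rintro (hlt | ⟨-, hlt⟩)
          · exact absurd hfx.symm (ne_of_lt hlt)
          · rwa [hhx] at hlt
      · constructor
        · intro _; exact Or.inl hfx
        · intro _; exact hfpos x hfx
    refine ⟨E, fun a b => ?_⟩
    have hr_iff : r a b ↔ r (a - b) 0 := by
      constructor
      · intro hab
        have := hadd a b (-b) hab
        rwa [add_neg_cancel, ← sub_eq_add_neg] at this
      · intro hab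
        have := hadd (a - b) 0 b hab
        rwa [sub_add_cancel, zero_add] at this
    rw [hr_iff, hkey]
    have hsub : E (a - b) = E a - E b := map_sub E a b
    rw [hsub]
    rw [show toLex (E a - E b) = toLex (E a) - toLex (E b) from rfl,
      show toLex (0 : Fin (m+1) → ℝ) = (0 : Lex (Fin (m+1) → ℝ)) from rfl]
    exact sub_pos

/-- Every total order (strict total order `≻`) on `ℝⁿ` compatible with addition and with
multiplication by positive scalars is the lexicographic order related to some coordinate
system, i.e. there is a linear automorphism `e` with `a ≻ b ↔ toLex (e a) > toLex (e b)`. -/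
theorem order_is_lexicographic
    {n : ℕ} (r : (Fin n → ℝ) → (Fin n → ℝ) → Prop)
    (hord : IsStrictTotalOrder (Fin n → ℝ) r)
    (hadd : ∀ x y a : Fin n → ℝ, r x y → r (x + a) (y + a))
    (hsmul : ∀ x y : Fin n → ℝ, ∀ μ : ℝ, 0 < μ → r x y → r (μ • x) (μ • y)) :
    ∃ e : (Fin n → ℝ) ≃ₗ[ℝ] (Fin n → ℝ),
      ∀ a b : Fin n → ℝ, r a b ↔ toLex (e b) < toLex (e a) := by
  obtain ⟨e, he⟩ := order_is_lex_aux n r hord hadd hsmul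
  exact ⟨e, he⟩
end

section
/- Let X ⊆ ℝⁿ (viewed as Fin n → ℝ) be a convex set, and let -X = {x : -x ∈ X}. Assume X ∪ (-X) = ℝⁿ \ {0} and X ∩ (-X) = ∅. Then there exists a linear automorphism e of ℝⁿ such that X = {v ∈ ℝⁿ : toLex(e v) > 0}. -/
open Module

private lemma lex_pos_cons_aux {m : ℕ} (a : ℝ) (w : Fin m → ℝ) :
    toLex (0 : Fin (m+1) → ℝ) < toLex (Fin.cons a w) ↔
      0 < a ∨ (a = 0 ∧ toLex (0 : Fin m → ℝ) < toLex w) := by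
  have hdef : ∀ (k : ℕ) (x y : Fin k → ℝ),
      (toLex x < toLex y ↔ ∃ i, (∀ j, j < i → x j = y j) ∧ x i < y i) := fun _ _ _ => Iff.rfl
  rw [hdef, hdef]
  constructor
  · rintro ⟨i, hlt, hi⟩
    refine Fin.cases ?_ ?_ i hlt hi
    · intro _ hi
      exact Or.inl (by simpa using hi)
    · intro k hlt hi
      have ha : a = 0 := by
        have := hlt 0 (Fin.succ_pos k)
        simpa using this.symm
      refine Or.inr ⟨ha, ⟨k, fun j hj => ?_, by simpa using hi⟩⟩
      have := hlt j.succ (by simpa [Fin.succ_lt_succ_iff] using hj)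
      simpa using this
  · rintro (ha | ⟨ha, k, hk, hks⟩)
    · exact ⟨0, fun j hj => absurd hj (Fin.not_lt_zero j), by simpa using ha⟩
    · refine ⟨k.succ, fun j hj => ?_, by simpa using hks⟩
      refine Fin.cases ?_ ?_ j hj
      · intro _; simpa using ha.symm
      · intro j' hj'
        have : j' < k := by simpa [Fin.succ_lt_succ_iff] using hj'
        simpa using hk j' this

private lemma key_lex_aux : ∀ (n : ℕ) (V : Type) (_ : NormedAddCommGroup V)
    (_ : NormedSpace ℝ V) (_ : FiniteDimensional ℝ V), finrank ℝ V = n →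
    ∀ X : Set V, Convex ℝ X → (X ∪ {x | -x ∈ X} = {(0 : V)}ᶜ) → (X ∩ {x | -x ∈ X} = ∅) →
    ∃ e : V ≃ₗ[ℝ] (Fin n → ℝ), X = {v : V | toLex (0 : Fin n → ℝ) < toLex (e v)} := by
  intro n
  induction n with
  | zero =>
    intro V _ _ _ hrank X hX hunion hinter
    have hsub : Subsingleton V := finrank_zero_iff.mp hrank
    have hXe : X = ∅ := by
      ext x
      simp only [Set.mem_empty_iff_false, iff_false]
      intro hx
      have : x ∈ ({(0 : V)}ᶜ : Set V) := hunion ▸ Set.mem_union_left _ hx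
      exact this (Subsingleton.elim x 0)
    refine ⟨LinearEquiv.ofFinrankEq _ _ (by simp [hrank]), ?_⟩
    rw [hXe]
    ext v
    simp only [Set.mem_empty_iff_false, Set.mem_setOf_eq, false_iff]
    rw [Subsingleton.elim
      ((LinearEquiv.ofFinrankEq _ _ (by simp [hrank]) : V ≃ₗ[ℝ] (Fin 0 → ℝ)) v) 0]
    exact lt_irrefl _
  | succ m IH =>
    intro V _ _ _ hrank X hX hunion hinter
    -- basic membership facts
    have hmem : ∀ x : V, x ≠ 0 → x ∈ X ∨ -x ∈ X := by
      intro x hx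
      have : x ∈ X ∪ {x | -x ∈ X} := hunion ▸ hx
      exact this
    have hne : ∀ x ∈ X, x ≠ 0 := by
      intro x hx
      have : x ∈ ({(0 : V)}ᶜ : Set V) := hunion ▸ Set.mem_union_left _ hx
      exact this
    have hnot : ∀ x ∈ X, -x ∉ X := by
      intro x hx hnx
      have : x ∈ X ∩ {x | -x ∈ X} := ⟨hx, hnx⟩
      rw [hinter] at this
      exact this
    have h0 : (0 : V) ∉ X := fun h => hne 0 h rfl
    -- X is a cone
    have hcone : ∀ x ∈ X, ∀ t : ℝ, 0 < t → t • x ∈ X := by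
      intro x hx t ht
      by_contra htx
      have hxne : x ≠ 0 := hne x hx
      have htxne : t • x ≠ 0 := smul_ne_zero ht.ne' hxne
      have hneg : -(t • x) ∈ X := (hmem _ htxne).resolve_left htx
      have hcomb : (t / (1 + t)) • x + (1 / (1 + t)) • (-(t • x)) ∈ X := by
        refine hX hx hneg (by positivity) (by positivity) ?_
        field_simp
        ring
      have : (t / (1 + t)) • x + (1 / (1 + t)) • (-(t • x)) = 0 := by
        have h1t : (1 : ℝ) + t ≠ 0 := by positivity
        rw [smul_neg, smul_smul]
        rw [← sub_eq_add_neg, ← sub_smul]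
        have : t / (1 + t) - 1 / (1 + t) * t = 0 := by
          field_simp
          ring
        rw [this, zero_smul]
      rw [this] at hcomb
      exact h0 hcomb
    -- the cone X together with the origin
    set s : Set V := X ∪ {0} with hs_def
    have hs_conv : Convex ℝ s := by
      intro x hx y hy a b ha hb hab
      rcases hx with hx | hx <;> rcases hy with hy | hy
      · exact Or.inl (hX hx hy ha hb hab)
      · simp only [Set.mem_singleton_iff] at hy
        subst hy
        rcases eq_or_lt_of_le ha with ha0 | ha0
        · right; simp [← ha0]
        · left; simpa using hcone x hx a ha0
      · simp only [Set.mem_singleton_iff] at hx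
        subst hx
        rcases eq_or_lt_of_le hb with hb0 | hb0
        · right; simp [← hb0]
        · left; simpa using hcone y hy b hb0
      · simp only [Set.mem_singleton_iff] at hx hy
        right; simp [hx, hy]
    have hs_cone : ∀ x ∈ s, ∀ t : ℝ, 0 < t → t • x ∈ s := by
      rintro x (hx | hx) t ht
      · exact Or.inl (hcone x hx t ht)
      · simp only [Set.mem_singleton_iff] at hx; right; simp [hx]
    -- closure of s is not everything
    have hC_ne : closure s ≠ Set.univ := by
      intro hcl
      have hspan : affineSpan ℝ s = ⊤ := by
        have hclosed : IsClosed (affineSpan ℝ s : Set V) :=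
          (affineSpan ℝ s).closed_of_finiteDimensional
        have : closure s ⊆ (affineSpan ℝ s : Set V) :=
          hclosed.closure_subset_iff.mpr (subset_affineSpan ℝ s)
        rw [hcl] at this
        rw [← AffineSubspace.coe_eq_univ_iff]
        exact Set.univ_subset_iff.mp this
      obtain ⟨z, hz⟩ := (hs_conv.interior_nonempty_iff_affineSpan_eq_top).mpr hspan
      have hs_univ : s = Set.univ := by
        refine Set.eq_univ_of_forall fun y => ?_
        have hy2 : (2 : ℝ) • y - z ∈ closure s := by rw [hcl]; trivial
        have := hs_conv.combo_interior_closure_mem_interior hz hy2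
          (by norm_num : (0:ℝ) < 1/2) (by norm_num : (0:ℝ) ≤ 1/2) (by norm_num)
        have heq : (1/2 : ℝ) • z + (1/2 : ℝ) • ((2:ℝ) • y - z) = y := by
          module
        rw [heq] at this
        exact interior_subset this
      have : Nontrivial V := (finrank_pos_iff (R := ℝ)).mp (by rw [hrank]; omega)
      obtain ⟨v, hv⟩ := exists_ne (0 : V)
      have hv1 : v ∈ X := by
        have : v ∈ s := hs_univ ▸ Set.mem_univ v
        rcases this with h | h
        · exact h
        · exact absurd h hv
      have hv2 : -v ∈ X := by
        have : -v ∈ s := hs_univ ▸ Set.mem_univ (-v)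
        rcases this with h | h
        · exact h
        · exact absurd (neg_eq_zero.mp h) hv
      have : v ∈ X ∩ {x | -x ∈ X} := ⟨hv1, hv2⟩
      rw [hinter] at this
      exact this
    -- separate a point from the closure
    obtain ⟨p, hp⟩ : ∃ p : V, p ∉ closure s := by
      by_contra h
      push_neg at h
      exact hC_ne (Set.eq_univ_of_forall h)
    obtain ⟨f, u, hfu, hup⟩ :=
      geometric_hahn_banach_closed_point (hs_conv.closure) isClosed_closure hp
    have h0s : (0 : V) ∈ s := by rw [hs_def]; right; rfl
    have hu0 : (0 : ℝ) < u := by simpa using hfu 0 (subset_closure h0s)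
    have hfle : ∀ x ∈ closure s, f x ≤ 0 := by
      intro x hx
      by_contra hfx
      push_neg at hfx
      have hcl_cone : ∀ y ∈ closure s, ∀ t : ℝ, 0 < t → t • y ∈ closure s := by
        intro y hy t ht
        exact map_mem_closure (continuous_const_smul t) hy (fun z hz => hs_cone z hz t ht)
      have ht : (0:ℝ) < (u + 1) / f x := by positivity
      have := hfu _ (hcl_cone x hx _ ht)
      rw [map_smul] at this
      simp only [smul_eq_mul] at this
      rw [div_mul_cancel₀ _ (ne_of_gt hfx)] at this
      linarith
    -- the positive side of g := -f is inside X
    set g : V →L[ℝ] ℝ := -f with hg_def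
    have hgX : ∀ v : V, 0 < g v → v ∈ X := by
      intro v hv
      have hfv : f v < 0 := by simpa [hg_def, neg_pos] using hv
      have hvne : v ≠ 0 := by rintro rfl; simp at hfv
      rcases hmem v hvne with h | h
      · exact h
      · exfalso
        have : f (-v) ≤ 0 := hfle _ (subset_closure (by rw [hs_def]; exact Or.inl h))
        rw [map_neg] at this
        linarith
    have hXg : ∀ v ∈ X, 0 ≤ g v := by
      intro v hv
      have : f v ≤ 0 := hfle _ (subset_closure (by rw [hs_def]; exact Or.inl hv))
      simpa [hg_def] using this
    have hgpne : g p ≠ 0 := by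
      have : 0 < f p := lt_trans hu0 hup
      simp only [hg_def, ContinuousLinearMap.neg_apply, ne_eq, neg_eq_zero]
      linarith
    obtain ⟨u₀, hu₀⟩ : ∃ u₀ : V, g u₀ = 1 := ⟨(g p)⁻¹ • p, by simp [inv_mul_cancel₀ hgpne]⟩
    clear hgpne hfle hfu hup hu0 hg_def hp h0s hC_ne hs_cone hs_conv hs_def
    -- the kernel of g
    set K : Submodule ℝ V := LinearMap.ker (g : V →ₗ[ℝ] ℝ) with hK_def
    have hKrank : finrank ℝ K = m := by
      have hsurj : Function.Surjective (g : V →ₗ[ℝ] ℝ) := by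
        intro c
        exact ⟨c • u₀, by simp [hu₀]⟩
      have := LinearMap.finrank_range_add_finrank_ker (g : V →ₗ[ℝ] ℝ)
      rw [LinearMap.range_eq_top.mpr hsurj, finrank_top, hrank] at this
      simp [Module.finrank_self] at this
      rw [hK_def]
      omega
    set X' : Set K := ((↑) ⁻¹' X : Set K) with hX'_def
    have hX'conv : Convex ℝ X' := hX.linear_preimage K.subtype
    have hX'union : X' ∪ {x | -x ∈ X'} = {(0 : K)}ᶜ := by
      ext x
      simp only [Set.mem_union, Set.mem_setOf_eq, Set.mem_compl_iff, Set.mem_singleton_iff,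
        hX'_def, Set.mem_preimage]
      constructor
      · rintro (h | h)
        · intro h0; exact hne _ h (by simp [h0])
        · intro h0; exact hne _ (by simpa using h) (by simp [h0])
      · intro hx0
        have : (x : V) ≠ 0 := fun h => hx0 (Subtype.ext h)
        rcases hmem _ this with h | h
        · exact Or.inl h
        · exact Or.inr (by simpa using h)
    have hX'inter : X' ∩ {x | -x ∈ X'} = ∅ := by
      ext x
      simp only [Set.mem_inter_iff, Set.mem_setOf_eq, Set.mem_empty_iff_false, iff_false,
        hX'_def, Set.mem_preimage]
      rintro ⟨h1, h2⟩
      have : (x : V) ∈ X ∩ {y | -y ∈ X} := ⟨h1, by simpa using h2⟩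
      rw [hinter] at this
      exact this
    obtain ⟨e', he'⟩ := IH K inferInstance inferInstance inferInstance hKrank X' hX'conv
      hX'union hX'inter
    -- projection onto K
    have hπmem : ∀ v : V, v - g v • u₀ ∈ K := by
      intro v
      simp [hK_def, LinearMap.mem_ker, hu₀]
    set π : V → K := fun v => ⟨v - g v • u₀, hπmem v⟩ with hπ_def
    -- the equivalence
    set e : V ≃ₗ[ℝ] (Fin (m+1) → ℝ) :=
      { toFun := fun v => Fin.cons (g v) (e' (π v))
        invFun := fun w => (e'.symm (Fin.tail w) : V) + (w 0) • u₀
        map_add' := by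
          intro x y
          funext i
          refine Fin.cases ?_ (fun j => ?_) i
          · simp
          · have : π (x + y) = π x + π y := by
              apply Subtype.ext
              simp [hπ_def]
              module
            simp [this]
        map_smul' := by
          intro c x
          funext i
          refine Fin.cases ?_ (fun j => ?_) i
          · simp
          · have : π (c • x) = c • π x := by
              apply Subtype.ext
              simp [hπ_def]
              module
            simp [this]
        left_inv := by
          intro v
          simp only [Fin.tail_cons, Fin.cons_zero, LinearEquiv.symm_apply_apply]
          simp [hπ_def]
        right_inv := by
          intro w
          funext i
          refine Fin.cases ?_ (fun j => ?_) i
          · simp [hu₀]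
          · have hπw : π ((e'.symm (Fin.tail w) : V) + (w 0) • u₀) = e'.symm (Fin.tail w) := by
              apply Subtype.ext
              simp [hπ_def, hu₀]
            simp [hπw, Fin.tail] } with he_def
    refine ⟨e, ?_⟩
    ext v
    simp only [Set.mem_setOf_eq, he_def, LinearEquiv.coe_mk, LinearMap.coe_mk, AddHom.coe_mk]
    rw [lex_pos_cons_aux]
    constructor
    · intro hv
      rcases lt_or_eq_of_le (hXg v hv) with h | h
      · exact Or.inl h
      · refine Or.inr ⟨h.symm, ?_⟩
        have hvK : π v = ⟨v, by simp [hK_def, LinearMap.mem_ker, ← h]⟩ := by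
          apply Subtype.ext
          simp [hπ_def, ← h]
        rw [hvK]
        have : (⟨v, by simp [hK_def, LinearMap.mem_ker, ← h]⟩ : K) ∈ X' := hv
        rw [he'] at this
        exact this
    · rintro (h | ⟨h, hlex⟩)
      · exact hgX v h
      · have hvK : π v = ⟨v, by simp [hK_def, LinearMap.mem_ker, h]⟩ := by
          apply Subtype.ext
          simp [hπ_def, h]
        rw [hvK] at hlex
        have : (⟨v, by simp [hK_def, LinearMap.mem_ker, h]⟩ : K) ∈ X' := by
          rw [he']
          exact hlex
        exact this

/-- If `X ⊆ ℝⁿ` is convex, `X ∪ (-X) = ℝⁿ \ {0}` and `X ∩ (-X) = ∅`, then `X` is the positive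
half-space of the lexicographic order in some coordinate system: there is a linear
automorphism `e` of `ℝⁿ` with `X = {v : toLex (e v) > 0}`. -/
theorem convex_half_space_is_lexicographic
    {n : ℕ} (X : Set (Fin n → ℝ)) (hX : Convex ℝ X)
    (hunion : X ∪ {x | -x ∈ X} = {(0 : Fin n → ℝ)}ᶜ)
    (hinter : X ∩ {x | -x ∈ X} = ∅) :
    ∃ e : (Fin n → ℝ) ≃ₗ[ℝ] (Fin n → ℝ),
      X = {v : Fin n → ℝ | toLex (0 : Fin n → ℝ) < toLex (e v)} := by
  exact key_lex_aux n (Fin n → ℝ) inferInstance inferInstance inferInstance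
    (Module.finrank_fin_fun ℝ) X hX hunion hinter
end

section
/- Let G be an additive subgroup of ℝ equipped with a total order ≻ compatible with addition, and let G₊ = {a ∈ G : a ≻ 0}. If the convex hull of G₊ in ℝ does not contain 0, then either for all a, b ∈ G, a ≻ b ⇔ a > b (the order induced by the natural order on ℝ), or for all a, b ∈ G, a ≻ b ⇔ a < b (the opposite order). -/
/-- Let `G` be an additive subgroup of `ℝ` with a total order `≻` (strict total order `r`)
compatible with addition, and `G₊ = {a ∈ G : a ≻ 0}`. If the convex hull of `G₊` does not
contain `0`, then `≻` is either the natural order of `ℝ` or its opposite. -/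
theorem order_on_real_subgroup_of_convex_hull
    (G : AddSubgroup ℝ) (r : G → G → Prop)
    (hord : IsStrictTotalOrder G r)
    (hcompat : ∀ x y a : G, r x y → r (x + a) (y + a))
    (hhull : (0 : ℝ) ∉ convexHull ℝ (Subtype.val '' {x : G | r x 0})) :
    (∀ a b : G, r a b ↔ (b : ℝ) < (a : ℝ)) ∨
    (∀ a b : G, r a b ↔ (a : ℝ) < (b : ℝ)) := by
  set S : Set ℝ := Subtype.val '' {x : G | r x 0} with hS
  have hmemS : ∀ x : G, r x 0 → (x : ℝ) ∈ S := fun x hx => ⟨x, hx, rfl⟩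
  have hne : ∀ x : G, r x 0 → (x : ℝ) ≠ 0 := by
    intro x hx h0
    exact hhull (h0 ▸ subset_convexHull ℝ S (hmemS x hx))
  -- if one positive and one negative element both satisfy r · 0, then 0 ∈ hull
  have hmix : ∀ x y : G, r x 0 → r y 0 → (x : ℝ) < 0 → 0 < (y : ℝ) → False := by
    intro x y hx hy hxneg hypos
    apply hhull
    have hseg : segment ℝ (x : ℝ) (y : ℝ) ⊆ convexHull ℝ S :=
      (convex_convexHull ℝ S).segment_subset
        (subset_convexHull ℝ S (hmemS x hx)) (subset_convexHull ℝ S (hmemS y hy))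
    apply hseg
    rw [segment_eq_Icc (le_of_lt (hxneg.trans hypos))]
    exact ⟨le_of_lt hxneg, le_of_lt hypos⟩
  have htri := hord.trichotomous
  -- key: r a b ↔ r (a - b) 0
  have hshift : ∀ a b : G, r a b ↔ r (a - b) 0 := by
    intro a b
    constructor
    · intro h
      have := hcompat a b (-b) h
      simpa [sub_eq_add_neg] using this
    · intro h
      have := hcompat (a - b) 0 b h
      simpa using this
  by_cases hpos : ∀ x : G, r x 0 → 0 < (x : ℝ)
  · left
    intro a b
    constructor
    · intro h
      have := hpos _ ((hshift a b).1 h)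
      push_cast at this
      linarith
    · intro h
      rcases (show r a b ∨ a = b ∨ r b a from (em (r a b)).elim Or.inl fun h1 => (em (r b a)).elim (fun h2 => Or.inr (Or.inr h2)) fun h2 => Or.inr (Or.inl (htri a b h1 h2))) with h' | h' | h'
      · exact h'
      · exact absurd (congrArg (Subtype.val) h') (by exact ne_of_gt h)
      · have := hpos _ ((hshift b a).1 h')
        push_cast at this
        linarith
  · right
    push_neg at hpos
    obtain ⟨x, hx, hxle⟩ := hpos
    have hxneg : (x : ℝ) < 0 := lt_of_le_of_ne hxle (hne x hx)
    have hneg : ∀ y : G, r y 0 → (y : ℝ) < 0 := by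
      intro y hy
      rcases lt_trichotomy (y : ℝ) 0 with h | h | h
      · exact h
      · exact absurd h (hne y hy)
      · exact absurd (hmix x y hx hy hxneg h) (fun t => t)
    intro a b
    constructor
    · intro h
      have := hneg _ ((hshift a b).1 h)
      push_cast at this
      linarith
    · intro h
      rcases (show r a b ∨ a = b ∨ r b a from (em (r a b)).elim Or.inl fun h1 => (em (r b a)).elim (fun h2 => Or.inr (Or.inr h2)) fun h2 => Or.inr (Or.inl (htri a b h1 h2))) with h' | h' | h'
      · exact h'
      · exact absurd (congrArg (Subtype.val) h') (by exact ne_of_lt h)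
      · have := hneg _ ((hshift b a).1 h')
        push_cast at this
        linarith
end

section
/- Let S be an additive subsemigroup of ℝ all of whose elements are rational numbers. Then 0 belongs to the convex hull of S in ℝ if and only if 0 ∈ S. -/
private lemma nsmul_mem_subsemigroup (S : AddSubsemigroup ℝ) {x : ℝ} (hx : x ∈ S) :
    ∀ n : ℕ, 0 < n → n • x ∈ S := by
  intro n
  induction n with
  | zero => intro h; exact absurd h (lt_irrefl 0)
  | succ k ih =>
    intro _
    rcases Nat.eq_zero_or_pos k with hk | hk
    · simpa [hk] using hx
    · have : (k + 1) • x = k • x + x := by rw [add_nsmul, one_nsmul]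
      rw [this]
      exact S.add_mem (ih hk) hx

/-- For an additive subsemigroup `S` of `ℝ` consisting of rational numbers, `0` lies in the
convex hull of `S` if and only if `0 ∈ S`. -/
theorem zero_mem_convexHull_iff_zero_mem_rational_subsemigroup
    (S : AddSubsemigroup ℝ) (hrat : ∀ x ∈ S, ∃ q : ℚ, (q : ℝ) = x) :
    (0 : ℝ) ∈ convexHull ℝ (S : Set ℝ) ↔ (0 : ℝ) ∈ S := by
  constructor
  · intro h0
    have hle : ∃ a ∈ S, a ≤ 0 := by
      by_contra hc
      push_neg at hc
      have hsub : (S : Set ℝ) ⊆ Set.Ioi 0 := fun x hx => hc x hx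
      have h := convexHull_min hsub (convex_Ioi 0) h0
      exact lt_irrefl 0 (Set.mem_Ioi.mp h)
    have hge : ∃ b ∈ S, 0 ≤ b := by
      by_contra hc
      push_neg at hc
      have hsub : (S : Set ℝ) ⊆ Set.Iio 0 := fun x hx => hc x hx
      have h := convexHull_min hsub (convex_Iio 0) h0
      exact lt_irrefl 0 (Set.mem_Iio.mp h)
    obtain ⟨a, haS, ha⟩ := hle
    obtain ⟨b, hbS, hb⟩ := hge
    rcases eq_or_lt_of_le ha with h | ha'
    · rwa [h] at haS
    rcases eq_or_lt_of_le hb with h | hb'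
    · rwa [← h] at hbS
    obtain ⟨p, hp⟩ := hrat a haS
    obtain ⟨q, hq⟩ := hrat b hbS
    have hpneg : p < 0 := by exact_mod_cast hp ▸ ha'
    have hqpos : 0 < q := by exact_mod_cast hq ▸ hb'
    have hqn : 0 < q.num := Rat.num_pos.mpr hqpos
    have hpn : p.num < 0 := Rat.num_neg.mpr hpneg
    have h1 : (q.num.toNat : ℤ) = q.num := Int.toNat_of_nonneg hqn.le
    have h2 : ((-p.num).toNat : ℤ) = -p.num := Int.toNat_of_nonneg (by omega)
    have hmpos : 0 < q.num.toNat * p.den := Nat.mul_pos (by omega) p.pos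
    have hnpos : 0 < (-p.num).toNat * q.den := Nat.mul_pos (by omega) q.pos
    have key : ((q.num.toNat * p.den : ℕ) : ℝ) * a + (((-p.num).toNat * q.den : ℕ) : ℝ) * b = 0 := by
      rw [← hp, ← hq]
      have hQ : ((q.num.toNat * p.den : ℕ) : ℚ) * p + (((-p.num).toNat * q.den : ℕ) : ℚ) * q = 0 := by
        have hmZ : ((q.num.toNat * p.den : ℕ) : ℤ) = q.num * p.den := by
          push_cast [h1]; ring
        have hnZ : (((-p.num).toNat * q.den : ℕ) : ℤ) = -p.num * q.den := by
          push_cast [h2]; ring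
        have hmq : ((q.num.toNat * p.den : ℕ) : ℚ) = (q.num : ℚ) * p.den := by
          exact_mod_cast hmZ
        have hnq : (((-p.num).toNat * q.den : ℕ) : ℚ) = (-p.num : ℚ) * q.den := by
          exact_mod_cast hnZ
        rw [hmq, hnq]
        have hpd : ((p.den : ℚ)) * p = p.num := by
          rw [mul_comm]; exact_mod_cast Rat.mul_den_eq_num p
        have hqd : ((q.den : ℚ)) * q = q.num := by
          rw [mul_comm]; exact_mod_cast Rat.mul_den_eq_num q
        calc (q.num : ℚ) * p.den * p + (-p.num : ℚ) * q.den * q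
            = (q.num : ℚ) * ((p.den : ℚ) * p) + (-p.num : ℚ) * ((q.den : ℚ) * q) := by ring
          _ = (q.num : ℚ) * p.num + (-p.num : ℚ) * q.num := by rw [hpd, hqd]
          _ = 0 := by ring
      exact_mod_cast hQ
    have hma := nsmul_mem_subsemigroup S haS _ hmpos
    have hnb := nsmul_mem_subsemigroup S hbS _ hnpos
    rw [nsmul_eq_mul] at hma hnb
    have hmem := S.add_mem hma hnb
    rwa [key] at hmem
  · intro h
    exact subset_convexHull ℝ (S : Set ℝ) h
end

section
/- Let G be a nontrivial additive subgroup of ℚ. Then any total order ≻ on G compatible with addition is either the natural order (for all a, b ∈ G, a ≻ b ⇔ a > b) or the reverse order (for all a, b ∈ G, a ≻ b ⇔ a < b); consequently G admits exactly two total orders compatible with addition. -/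
section Aux

variable {G : AddSubgroup ℚ}

/-- translation characterization -/
lemma aux_shift (r : G → G → Prop)
    (hc : ∀ x y a : G, r x y → r (x + a) (y + a)) (a b : G) :
    r a b ↔ r 0 (b - a) := by
  constructor
  · intro h
    have := hc a b (-a) h
    simpa [sub_eq_add_neg] using this
  · intro h
    have := hc 0 (b - a) a h
    simpa using this

lemma aux_nsmul (r : G → G → Prop) [hto : IsStrictTotalOrder G r]
    (hc : ∀ x y a : G, r x y → r (x + a) (y + a)) {x : G} (hx : r 0 x) :
    ∀ n : ℕ, r 0 ((n + 1) • x) := by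
  intro n
  induction n with
  | zero => simpa using hx
  | succ n ih =>
    have h2 := hc 0 x ((n + 1) • x) hx
    have h2' : r ((n + 1) • x) ((n + 2) • x) := by
      have : x + (n + 1) • x = (n + 2) • x := by
        rw [add_comm, ← succ_nsmul]
      simpa [this] using h2
    exact hto.trans _ _ _ ih (by simpa using h2')

lemma aux_asymm (r : G → G → Prop) [hto : IsStrictTotalOrder G r] {a b : G}
    (h : r a b) (h' : r b a) : False :=
  hto.irrefl a (hto.trans _ _ _ h h')

/-- commensurability in ℚ -/
lemma aux_comm {x y : G} (hx : 0 < (x : ℚ)) (hy : 0 < (y : ℚ)) :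
    ∃ n m : ℕ, n • x = m • y ∧ 0 < n ∧ 0 < m := by
  refine ⟨(y : ℚ).num.toNat * (x : ℚ).den, (x : ℚ).num.toNat * (y : ℚ).den, ?_, ?_, ?_⟩
  · apply Subtype.ext
    push_cast
    rw [nsmul_eq_mul, nsmul_eq_mul]
    push_cast [Int.toNat_of_nonneg (Rat.num_pos.2 hx).le, Int.toNat_of_nonneg (Rat.num_pos.2 hy).le]
    have hxn : 0 < (x : ℚ).num := Rat.num_pos.2 hx
    have hyn : 0 < (y : ℚ).num := Rat.num_pos.2 hy
    have e1 : ((x : ℚ).den : ℚ) * (x : ℚ) = (x : ℚ).num := by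
      rw [mul_comm, Rat.mul_den_eq_num]
    have e2 : ((y : ℚ).den : ℚ) * (y : ℚ) = (y : ℚ).num := by
      rw [mul_comm, Rat.mul_den_eq_num]
    have t1 : (((x : ℚ).num.toNat : ℕ) : ℚ) = ((x : ℚ).num : ℚ) := by
      exact_mod_cast congrArg (Int.cast : ℤ → ℚ) (Int.toNat_of_nonneg hxn.le)
    have t2 : (((y : ℚ).num.toNat : ℕ) : ℚ) = ((y : ℚ).num : ℚ) := by
      exact_mod_cast congrArg (Int.cast : ℤ → ℚ) (Int.toNat_of_nonneg hyn.le)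
    rw [mul_assoc, mul_assoc, e1, e2, t1, t2]
    ring
  · exact Nat.mul_pos (by have := Rat.num_pos.2 hy; omega) (x : ℚ).pos
  · exact Nat.mul_pos (by have := Rat.num_pos.2 hx; omega) (y : ℚ).pos

end Aux

section Aux2

variable {G : AddSubgroup ℚ}

lemma aux_swapSTO (r : G → G → Prop) (h : IsStrictTotalOrder G r) :
    IsStrictTotalOrder G (fun a b => r b a) where
  trichotomous a b := by
    rcases (haveI := h; trichotomous (r := r) a b) with h1 | h1 | h1
    · exact fun _ h2 => absurd h1 h2
    · exact fun _ _ => h1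
    · exact fun h2 _ => absurd h1 h2
  irrefl a := h.irrefl a
  trans a b c h1 h2 := h.trans _ _ _ h2 h1

lemma aux_main (r : G → G → Prop) (hto : IsStrictTotalOrder G r)
    (hc : ∀ x y a : G, r x y → r (x + a) (y + a))
    (hpos : ∃ g : G, 0 < (g : ℚ) ∧ r 0 g) :
    ∀ a b : G, r a b ↔ (a : ℚ) < (b : ℚ) := by
  obtain ⟨g, hg, hrg⟩ := hpos
  have key : ∀ x : G, 0 < (x : ℚ) → r 0 x := by
    intro x hx
    rcases (haveI := hto; trichotomous (r := r) 0 x) with h | h | h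
    · exact h
    · exact absurd (congrArg (Subtype.val) h).symm (ne_of_gt hx)
    · exfalso
      obtain ⟨n, m, hnm, hn, hm⟩ := aux_comm hg hx
      obtain ⟨n', rfl⟩ := Nat.exists_eq_add_of_lt hn
      obtain ⟨m', rfl⟩ := Nat.exists_eq_add_of_lt hm
      have h1 : r 0 ((n' + 1) • g) := by
        have := aux_nsmul (hto := hto) r hc hrg n'
        simpa [add_comm] using this
      have h2 : r ((m' + 1) • x) 0 := by
        have := aux_nsmul (hto := aux_swapSTO r hto) (fun a b => r b a)
          (fun a b c hab => hc b a c hab) h m'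
        simpa [add_comm] using this
      simp only [Nat.zero_add] at hnm
      exact aux_asymm (hto := hto) r (hnm ▸ h1) h2
  intro a b
  rw [aux_shift r hc]
  constructor
  · intro h
    rcases lt_trichotomy (a : ℚ) (b : ℚ) with h1 | h1 | h1
    · exact h1
    · exact absurd (show b - a = 0 from Subtype.ext (by push_cast; rw [h1]; ring))
        (fun e => hto.irrefl 0 (e ▸ h))
    · have : r 0 (a - b) := key _ (by push_cast; linarith)
      rw [← aux_shift r hc] at h this
      exact absurd h (fun _ => aux_asymm (hto := hto) r h this)
  · intro h
    exact key _ (by push_cast; linarith)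

end Aux2

/-- A nontrivial additive subgroup `G` of `ℚ` has exactly two total orders (strict total
orders) compatible with addition: the natural order and the reverse order; every such order
is one of these two. -/
theorem rational_subgroup_has_exactly_two_orders
    (G : AddSubgroup ℚ) (hG : G ≠ ⊥) :
    (∀ r : G → G → Prop, IsStrictTotalOrder G r →
      (∀ x y a : G, r x y → r (x + a) (y + a)) →
      ((∀ a b : G, r a b ↔ (b : ℚ) < (a : ℚ)) ∨
       (∀ a b : G, r a b ↔ (a : ℚ) < (b : ℚ)))) ∧
    {r : G → G → Prop |
        IsStrictTotalOrder G r ∧ ∀ x y a : G, r x y → r (x + a) (y + a)}.ncard = 2 := by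
  obtain ⟨g0, hg0⟩ : ∃ a : G, a ≠ 0 := AddSubgroup.ne_bot_iff_exists_ne_zero.mp hG
  have hg0' : (g0 : ℚ) ≠ 0 := by
    intro h; exact hg0 (Subtype.ext h)
  set p : G := if 0 < (g0 : ℚ) then g0 else -g0 with hp
  have hppos : 0 < (p : ℚ) := by
    rw [hp]; split_ifs with h
    · exact h
    · push_cast; push_neg at h; rcases h.lt_or_eq with h | h
      · linarith
      · exact absurd h hg0'
  have main : ∀ r : G → G → Prop, IsStrictTotalOrder G r →
      (∀ x y a : G, r x y → r (x + a) (y + a)) →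
      ((∀ a b : G, r a b ↔ (b : ℚ) < (a : ℚ)) ∨
       (∀ a b : G, r a b ↔ (a : ℚ) < (b : ℚ))) := by
    intro r hto hc
    rcases (haveI := hto; trichotomous (r := r) 0 p) with h | h | h
    · exact Or.inr (aux_main r hto hc ⟨p, hppos, h⟩)
    · exact absurd (congrArg Subtype.val h).symm (ne_of_gt hppos)
    · left
      have := aux_main (fun a b => r b a) (aux_swapSTO r hto)
        (fun x y a hxy => hc y x a hxy) ⟨p, hppos, h⟩
      exact fun a b => this b a
  refine ⟨main, ?_⟩
  have hset : {r : G → G → Prop |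
        IsStrictTotalOrder G r ∧ ∀ x y a : G, r x y → r (x + a) (y + a)} =
      {(fun a b : G => (b : ℚ) < (a : ℚ)), (fun a b : G => (a : ℚ) < (b : ℚ))} := by
    ext r
    simp only [Set.mem_setOf_eq, Set.mem_insert_iff, Set.mem_singleton_iff]
    constructor
    · rintro ⟨hto, hc⟩
      rcases main r hto hc with h | h
      · exact Or.inl (funext fun a => funext fun b => propext (h a b))
      · exact Or.inr (funext fun a => funext fun b => propext (h a b))
    · have hord : ∀ s : G → G → Prop, (∀ a b : G, s a b ↔ (a : ℚ) < (b : ℚ)) →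
          IsStrictTotalOrder G s ∧ ∀ x y a : G, s x y → s (x + a) (y + a) := by
        intro s hs
        constructor
        · refine { trichotomous := ?_, irrefl := ?_, trans := ?_ }
          · intro a b
            rcases lt_trichotomy (a : ℚ) (b : ℚ) with h | h | h
            · exact fun h1 _ => absurd ((hs a b).mpr h) h1
            · exact fun _ _ => Subtype.ext h
            · exact fun _ h2 => absurd ((hs b a).mpr h) h2
          · exact fun a ha => lt_irrefl _ ((hs a a).mp ha)
          · exact fun a b c h1 h2 => (hs a c).mpr (lt_trans ((hs a b).mp h1) ((hs b c).mp h2))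
        · intro x y a h
          apply (hs _ _).mpr
          have := (hs x y).mp h
          push_cast
          linarith
      rintro (rfl | rfl)
      · have h1 := hord (fun a b : G => (a : ℚ) < (b : ℚ)) (fun a b => Iff.rfl)
        exact ⟨aux_swapSTO _ h1.1, fun x y a h => h1.2 y x a h⟩
      · exact hord _ (fun a b => Iff.rfl)
  rw [hset]
  apply Set.ncard_pair
  intro h
  have h2 := congrFun (congrFun h 0) p
  simp only [ZeroMemClass.coe_zero] at h2
  rw [eq_iff_iff] at h2
  exact absurd (h2.mpr hppos) (by simpa using hppos.le)
end

section
/- Let S be a finitely generated additive subsemigroup of ℚ equipped with a total order ≻ compatible with addition. Then S is a well-ordered set with respect to ≻ (every nonempty subset has a ≻-least element) if and only if for every nonzero element a ∈ S, a + a ≻ a. -/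
/-- Iterated addition in a magma: `powS a n = (n+1) • a`. -/
private def powS {M : Type*} [Add M] (a : M) : ℕ → M
  | 0 => a
  | n + 1 => powS a n + a

private lemma powS_val {S : AddSubsemigroup ℚ} (a : S) (n : ℕ) :
    ((powS a n : S) : ℚ) = (n + 1) * (a : ℚ) := by
  induction n with
  | zero => simp [powS]
  | succ n ih =>
    show ((powS a n + a : S) : ℚ) = _
    push_cast [ih]
    ring

private lemma rat_commensurable {u v : ℚ} (hu : 0 < u) (hv : 0 < v) :
    ∃ k l : ℕ, 0 < k ∧ 0 < l ∧ (k : ℚ) * u = (l : ℚ) * v := by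
  have hw : 0 < u / v := div_pos hu hv
  refine ⟨(u / v).den, (u / v).num.natAbs, (u / v).pos,
    Int.natAbs_pos.mpr (ne_of_gt (Rat.num_pos.mpr hw)), ?_⟩
  have key : (((u / v).num : ℚ)) / (((u / v).den : ℚ)) = u / v := Rat.num_div_den _
  have h1 : ((((u / v).num.natAbs : ℕ)) : ℚ) = (((u / v).num : ℚ)) := by
    rw [Nat.cast_natAbs]
    exact_mod_cast abs_of_nonneg (le_of_lt (Rat.num_pos.mpr hw))
  rw [h1]
  have hden : (((u / v).den : ℕ) : ℚ) ≠ 0 := Nat.cast_ne_zero.mpr (u / v).den_nz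
  rw [div_eq_div_iff hden (ne_of_gt hv)] at key
  linarith [key]

/-- A finitely generated additive subsemigroup `S` of `ℚ` with a total order `≻` (strict
total order `r`) compatible with addition is well-ordered by `≻` (every nonempty subset has a
`≻`-least element) if and only if `a + a ≻ a` for every nonzero `a ∈ S`. -/
theorem fg_rational_subsemigroup_well_ordered_iff
    (S : AddSubsemigroup ℚ)
    (hfg : ∃ T : Finset ℚ, S = AddSubsemigroup.closure (T : Set ℚ))
    (r : S → S → Prop)
    (hord : IsStrictTotalOrder S r)
    (hcompat : ∀ x y a : S, r x y → r (x + a) (y + a)) :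
    (∀ D : Set S, D.Nonempty → ∃ a ∈ D, ∀ b ∈ D, ¬ r a b) ↔
    (∀ a : S, (a : ℚ) ≠ 0 → r (a + a) a) := by
  have trich : ∀ a b : S, r a b ∨ a = b ∨ r b a := fun a b => (em (r a b)).elim Or.inl fun h1 => (em (r b a)).elim (fun h2 => Or.inr (Or.inr h2)) fun h2 => Or.inr (Or.inl (hord.trichotomous a b h1 h2))
  have htrans : ∀ {a b c : S}, r a b → r b c → r a c := fun h1 h2 => hord.trans _ _ _ h1 h2
  have hirrefl : ∀ a : S, ¬ r a a := hord.irrefl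
  have hasymm : ∀ {a b : S}, r a b → r b a → False := fun h1 h2 => hirrefl _ (htrans h1 h2)
  constructor
  · -- well-ordered → a + a ≻ a
    intro WO a ha
    rcases trich (a + a) a with h | h | h
    · exact h
    · exfalso
      apply ha
      have h' : (a : ℚ) + a = a := by exact_mod_cast congrArg Subtype.val h
      linarith
    · exfalso
      have hasc : ∀ n, r (powS a n) (powS a (n + 1)) := by
        intro n
        induction n with
        | zero => exact h
        | succ n ih => exact hcompat _ _ a ih
      obtain ⟨m, hmD, hm⟩ := WO (Set.range (powS a)) ⟨a, 0, rfl⟩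
      obtain ⟨n, rfl⟩ := hmD
      exact hm (powS a (n + 1)) ⟨n + 1, rfl⟩ (hasc n)
  · -- a + a ≻ a for all nonzero a → well-ordered
    intro hyp D hD
    obtain ⟨T, hT⟩ := hfg
    -- common denominator
    set d : ℕ := ∏ t ∈ T, t.den with hd_def
    have hd0 : 0 < d := Finset.prod_pos (fun t _ => t.pos)
    have hdQ : (0 : ℚ) < d := by exact_mod_cast hd0
    have hdenQ : ∀ q : ℚ, q ∈ AddSubsemigroup.closure (T : Set ℚ) → ∃ z : ℤ, q = z / d := by
      intro q hq
      induction hq using AddSubsemigroup.closure_induction with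
      | mem t ht =>
        obtain ⟨c, hc⟩ : t.den ∣ d := Finset.dvd_prod_of_mem _ ht
        have hc0 : c ≠ 0 := by
          intro h; rw [h, mul_zero] at hc; omega
        refine ⟨t.num * c, ?_⟩
        have : ((d : ℚ)) = (t.den : ℚ) * c := by rw [hc]; push_cast; ring
        rw [this]
        push_cast
        rw [mul_div_mul_right _ _ (by exact_mod_cast hc0), Rat.num_div_den]
      | add x y hx hy ihx ihy =>
        obtain ⟨z1, hz1⟩ := ihx
        obtain ⟨z2, hz2⟩ := ihy
        exact ⟨z1 + z2, by push_cast [hz1, hz2]; field_simp⟩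
    have hden : ∀ a : S, ∃ z : ℤ, (a : ℚ) = z / d := fun a => hdenQ a (hT ▸ a.2)
    -- an element whose value is 0 is the minimum
    have hzero : ∀ x y : S, (x : ℚ) = 0 → (y : ℚ) ≠ 0 → r y x := by
      intro x y hx hy
      rcases trich y x with h | h | h
      · exact h
      · exact absurd (h ▸ hy) (by simp [hx])
      · exfalso
        have h2 := hcompat x y y h
        have hxy : x + y = y := Subtype.ext (by push_cast [hx]; ring)
        rw [hxy] at h2
        exact hasymm h2 (hyp y hy)
    -- powers are monotone
    have hmono : ∀ (x y : S), r x y → ∀ n, r (powS x n) (powS y n) := by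
      intro x y h n
      induction n with
      | zero => exact h
      | succ n ih =>
        refine htrans (hcompat _ _ x ih) ?_
        show r (powS y n + x) (powS y n + y)
        rw [add_comm (powS y n) x, add_comm (powS y n) y]
        exact hcompat x y (powS y n) h
    -- powers of a nonzero element are strictly descending
    have hdesc : ∀ (a : S), (a : ℚ) ≠ 0 → ∀ n, r (powS a (n + 1)) (powS a n) := by
      intro a ha n
      induction n with
      | zero => exact hyp a ha
      | succ n ih => exact hcompat _ _ a ih
    have hdesc' : ∀ (a : S), (a : ℚ) ≠ 0 → ∀ m n, n < m → r (powS a m) (powS a n) := by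
      intro a ha m
      induction m with
      | zero => exact fun n h => absurd h (Nat.not_lt_zero n)
      | succ m ih =>
        intro n h
        rcases Nat.lt_succ_iff_lt_or_eq.mp h with h' | h'
        · exact htrans (hdesc a ha m) (ih n h')
        · subst h'; exact hdesc a ha n
    -- no mixed signs
    have hsign : ∀ x y : S, 0 < (x : ℚ) → (y : ℚ) < 0 → False := by
      intro x y hx hy
      obtain ⟨k, l, hk, hl, hkl⟩ := rat_commensurable hx (neg_pos.mpr hy)
      obtain ⟨k', rfl⟩ : ∃ k', k = k' + 1 := ⟨k - 1, by omega⟩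
      obtain ⟨l', rfl⟩ : ∃ l', l = l' + 1 := ⟨l - 1, by omega⟩
      set u := powS x k' with hu_def
      set v := powS y l' with hv_def
      have hu_val : (u : ℚ) = (k' + 1 : ℕ) * x := by rw [hu_def, powS_val]; push_cast; ring
      have hv_val : (v : ℚ) = (l' + 1 : ℕ) * y := by rw [hv_def, powS_val]; push_cast; ring
      have huv : (u : ℚ) + v = 0 := by
        rw [hu_val, hv_val]
        have : ((k' + 1 : ℕ) : ℚ) * x = ((l' + 1 : ℕ) : ℚ) * (-y) := hkl
        linarith
      have hu0 : (u : ℚ) ≠ 0 := by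
        rw [hu_val]; positivity
      have hv0 : (v : ℚ) ≠ 0 := by
        rw [hv_val]
        have : ((l' + 1 : ℕ) : ℚ) * y < 0 := by
          apply mul_neg_of_pos_of_neg _ hy
          positivity
        linarith
      have hz0 : ((u + v : S) : ℚ) = 0 := by push_cast; linarith
      have h1 : r u (u + v) := hzero (u + v) u hz0 hu0
      have h2 := hcompat u (u + v) v h1
      have h3 : u + v + v = v := Subtype.ext (by push_cast; push_cast at hz0; linarith)
      rw [h3] at h2
      exact hasymm h2 (hzero (u + v) v hz0 hv0)
    -- the main comparison lemma
    have hmain : ∀ x y : S, (x : ℚ) ≠ 0 → (y : ℚ) ≠ 0 → |(x : ℚ)| < |(y : ℚ)| → r y x := by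
      intro x y hx hy hlt
      rcases trich y x with h | h | h
      · exact h
      · exfalso
        rw [h] at hlt
        exact lt_irrefl _ hlt
      · exfalso
        -- x and y have the same sign
        have hxy : x ≠ y := by
          intro he; rw [he] at hlt; exact lt_irrefl _ hlt
        have hxyQ : (x : ℚ) ≠ (y : ℚ) := fun he => hxy (Subtype.ext he)
        have hd0' : |(y : ℚ) - x| > 0 := abs_pos.mpr (sub_ne_zero.mpr (Ne.symm hxyQ))
        obtain ⟨k, l, hk, hl, hkl⟩ := rat_commensurable hd0' (abs_pos.mpr hx)
        -- same sign: k * (y - x) = l * x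
        have hss : (k : ℚ) * ((y : ℚ) - x) = (l : ℚ) * x := by
          rcases hx.lt_or_gt with hx' | hx' <;> rcases hy.lt_or_gt with hy' | hy'
          · -- both negative : y < x < 0
            have hyx : (y : ℚ) < x := by
              rw [abs_of_neg hx', abs_of_neg hy'] at hlt; linarith
            rw [abs_of_neg (by linarith : (y : ℚ) - x < 0), abs_of_neg hx'] at hkl
            linarith
          · exact (hsign y x hy' hx').elim
          · exact (hsign x y hx' hy').elim
          · have hyx : (x : ℚ) < y := by
              rw [abs_of_pos hx', abs_of_pos hy'] at hlt; linarith
            rw [abs_of_pos (by linarith : (0:ℚ) < (y : ℚ) - x), abs_of_pos hx'] at hkl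
            linarith
        have hkey : (k : ℚ) * y = ((k + l : ℕ) : ℚ) * x := by push_cast; linarith
        obtain ⟨k', rfl⟩ : ∃ k', k = k' + 1 := ⟨k - 1, by omega⟩
        obtain ⟨l', rfl⟩ : ∃ l', l = l' + 1 := ⟨l - 1, by omega⟩
        have hpow : powS y k' = powS x (k' + l' + 1) := by
          apply Subtype.ext
          rw [powS_val, powS_val]
          push_cast
          push_cast at hkey
          linarith
        have h1 := hmono x y h k'
        rw [hpow] at h1
        exact hasymm h1 (hdesc' x hx (k' + l' + 1) k' (by omega))
    -- conclude: pick the element of D with minimal numerator (w.r.t. denominator d)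
    choose zf hzf using hden
    have habs_iff : ∀ a b : S, (zf a).natAbs < (zf b).natAbs → |(a : ℚ)| < |(b : ℚ)| := by
      intro a b hab
      rw [hzf a, hzf b, abs_div, abs_div, abs_of_pos hdQ]
      have h1 : |zf a| < |zf b| := by
        rw [Int.abs_eq_natAbs, Int.abs_eq_natAbs]; exact_mod_cast hab
      gcongr
      exact_mod_cast h1
    have habs_eq : ∀ a b : S, (zf a).natAbs = (zf b).natAbs → |(a : ℚ)| = |(b : ℚ)| := by
      intro a b hab
      rw [hzf a, hzf b, abs_div, abs_div]
      have h1 : |zf a| = |zf b| := by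
        rw [Int.abs_eq_natAbs, Int.abs_eq_natAbs]; exact_mod_cast hab
      congr 1
      exact_mod_cast h1
    obtain ⟨a, haD, hmin⟩ := (InvImage.wf (fun a : S => (zf a).natAbs) Nat.lt_wfRel.wf).has_min D hD
    refine ⟨a, haD, ?_⟩
    intro b hbD hrab
    rcases Nat.lt_trichotomy (zf a).natAbs (zf b).natAbs with h | h | h
    · have hab := habs_iff a b h
      by_cases ha0 : (a : ℚ) = 0
      · have hb0 : (b : ℚ) ≠ 0 := by
          intro hb
          rw [ha0, hb] at hab
          simp at hab
        exact hasymm hrab (hzero a b ha0 hb0)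
      · have hb0 : (b : ℚ) ≠ 0 := by
          intro hb
          rw [hb, abs_zero] at hab
          exact absurd hab (not_lt.mpr (abs_nonneg _))
        exact hasymm hrab (hmain a b ha0 hb0 hab)
    · have hab := habs_eq a b h
      have hEq : a = b := by
        rcases abs_eq_abs.mp hab with he | he
        · exact Subtype.ext he
        · by_cases ha0 : (a : ℚ) = 0
          · exact Subtype.ext (by rw [ha0] at he ⊢; linarith)
          · exfalso
            rcases lt_or_gt_of_ne ha0 with h1 | h1
            · exact hsign b a (by linarith) h1
            · exact hsign a b h1 (by linarith)
      rw [hEq] at hrab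
      exact hirrefl b hrab
    · exact hmin b hbD h
end

section
/- Let Δ be a convex subset of ℝⁿ (viewed as Fin n → ℝ), not necessarily closed or bounded, and let a ∈ ℝⁿ be a point with a ∉ Δ. Then there exists a linear automorphism e of ℝⁿ such that for every b ∈ Δ, toLex(e a) < toLex(e b); that is, Δ lies in the lexicographic half-space with vertex a for some coordinate system. -/
open Filter Set Topology

/-- Unfolding of the lexicographic strict order on `Fin k → ℝ`. -/
lemma lex_lt_iff' {k : ℕ} {x y : Fin k → ℝ} :
    toLex x < toLex y ↔ ∃ i, (∀ j, j < i → x j = y j) ∧ x i < y i :=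
  Iff.rfl

/-- Prepending a common first coordinate preserves strict lexicographic order. -/
lemma cons_lex_lt {k : ℕ} (c : ℝ) {u w : Fin k → ℝ} (h : toLex u < toLex w) :
    toLex (Fin.cons c u : Fin (k + 1) → ℝ) < toLex (Fin.cons c w : Fin (k + 1) → ℝ) := by
  obtain ⟨i, h1, h2⟩ := lex_lt_iff'.mp h
  refine lex_lt_iff'.mpr ⟨i.succ, fun j hj => ?_, by simpa using h2⟩
  induction j using Fin.cases with
  | zero => simp
  | succ j' =>
    have hj' : j' < i := by simpa [Fin.succ_lt_succ_iff] using hj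
    simpa using h1 j' hj'

/-- Weak separation of a point from a (possibly non-closed, non-empty) convex set
in a finite dimensional space: some nonzero linear functional is minimized at the point. -/
lemma exists_weak_separation {E : Type*} [NormedAddCommGroup E] [NormedSpace ℝ E]
    [FiniteDimensional ℝ E] {Δ : Set E} (hΔ : Convex ℝ Δ) (hne : Δ.Nonempty)
    {a : E} (ha : a ∉ Δ) :
    ∃ f : E →ₗ[ℝ] ℝ, f ≠ 0 ∧ ∀ b ∈ Δ, f a ≤ f b := by
  by_cases hcl : a ∈ closure Δ
  · rcases Set.eq_empty_or_nonempty (interior Δ) with hint | hint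
    · -- flat case: `Δ` lies in a proper affine subspace
      have hsp : affineSpan ℝ Δ ≠ ⊤ := by
        intro h
        have := hΔ.interior_nonempty_iff_affineSpan_eq_top.mpr h
        rw [hint] at this
        exact Set.not_nonempty_empty this
      have hdir : (affineSpan ℝ Δ).direction ≠ ⊤ := by
        intro h
        exact hsp ((AffineSubspace.direction_eq_top_iff_of_nonempty
          (hne.mono (subset_affineSpan ℝ Δ))).mp h)
      obtain ⟨f, hf0, hker⟩ :=
        (affineSpan ℝ Δ).direction.exists_le_ker_of_lt_top (lt_top_iff_ne_top.2 hdir)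
      obtain ⟨b₀, hb₀⟩ := hne
      have hclosed : closure Δ ⊆ (affineSpan ℝ Δ : Set E) :=
        closure_minimal (subset_affineSpan ℝ Δ) (affineSpan ℝ Δ).closed_of_finiteDimensional
      have key : ∀ x ∈ closure Δ, f x = f b₀ := by
        intro x hx
        have hmem : x -ᵥ b₀ ∈ (affineSpan ℝ Δ).direction :=
          AffineSubspace.vsub_mem_direction (hclosed hx) (subset_affineSpan ℝ Δ hb₀)
        have h0 : f (x - b₀) = 0 := hker hmem
        rw [map_sub] at h0
        linarith
      exact ⟨f, hf0, fun b hb => by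
        rw [key a hcl, key b (subset_closure hb)]⟩
    · -- interior nonempty
      obtain ⟨f, hf⟩ := geometric_hahn_banach_open_point hΔ.interior isOpen_interior
        (fun h => ha (interior_subset h))
      obtain ⟨x, hx⟩ := hint
      have hble : ∀ b ∈ Δ, f b ≤ f a := by
        intro b hb
        have cont : Continuous fun t : ℝ => f ((1 - t) • b + t • x) :=
          f.continuous.comp (((continuous_const.sub continuous_id).smul
            continuous_const).add (continuous_id.smul continuous_const))
        have htend : Tendsto (fun t : ℝ => f ((1 - t) • b + t • x)) (𝓝[>] 0) (𝓝 (f b)) := by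
          have h := (cont.tendsto 0).mono_left (nhdsWithin_le_nhds (s := Set.Ioi (0 : ℝ)))
          simpa using h
        refine le_of_tendsto htend ?_
        filter_upwards [Ioc_mem_nhdsGT_of_mem (Set.left_mem_Ico.2 zero_lt_one)] with t ht
        exact (hf _ (hΔ.combo_closure_interior_mem_interior (subset_closure hb) hx
          (by linarith [ht.2]) ht.1 (by ring))).le
      have hfx : f x < f a := hf x hx
      refine ⟨-f.toLinearMap, ?_, fun b hb => ?_⟩
      · intro h
        have h1 : f.toLinearMap = 0 := by
          have := congrArg Neg.neg h
          simpa using this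
        have h2 : f x = 0 := congrFun (congrArg DFunLike.coe h1) x
        have h3 : f a = 0 := congrFun (congrArg DFunLike.coe h1) a
        rw [h2, h3] at hfx
        exact lt_irrefl _ hfx
      · have := hble b hb
        simp only [LinearMap.neg_apply, ContinuousLinearMap.coe_coe]
        linarith
  · obtain ⟨f, u, hau, hub⟩ :=
      geometric_hahn_banach_point_closed hΔ.closure isClosed_closure hcl
    obtain ⟨b₀, hb₀⟩ := hne
    refine ⟨f.toLinearMap, ?_, fun b hb => ?_⟩
    · intro h
      have h2 : f a = 0 := congrFun (congrArg DFunLike.coe h) a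
      have h3 : f b₀ = 0 := congrFun (congrArg DFunLike.coe h) b₀
      have := hub b₀ (subset_closure hb₀)
      rw [h3] at this
      rw [h2] at hau
      linarith
    · exact (hau.trans (hub b (subset_closure hb))).le

/-- The main induction. -/
theorem lexicographic_separation_aux :
    ∀ (n : ℕ) (Δ : Set (Fin n → ℝ)), Convex ℝ Δ → ∀ a ∉ Δ,
      ∃ e : (Fin n → ℝ) ≃ₗ[ℝ] (Fin n → ℝ), ∀ b ∈ Δ, toLex (e a) < toLex (e b) := by
  intro n
  induction n with
  | zero =>
    intro Δ hΔ a ha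
    exact ⟨LinearEquiv.refl ℝ _, fun b hb => absurd (Subsingleton.elim a b ▸ hb) ha⟩
  | succ n IH =>
    intro Δ hΔ a ha
    rcases Set.eq_empty_or_nonempty Δ with rfl | hne
    · exact ⟨LinearEquiv.refl ℝ _, fun b hb => absurd hb (Set.notMem_empty b)⟩
    set Δ₀ : Set (Fin (n + 1) → ℝ) := (fun x => x - a) '' Δ with hΔ₀def
    have hΔ₀ : Convex ℝ Δ₀ := by
      have heq : (fun x : Fin (n + 1) → ℝ => x - a) = fun x => -a + x :=
        funext fun x => sub_eq_neg_add x a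
      rw [hΔ₀def, heq]
      exact hΔ.translate (-a)
    have h0 : (0 : Fin (n + 1) → ℝ) ∉ Δ₀ := by
      rintro ⟨b, hb, hb0⟩
      exact ha (sub_eq_zero.mp hb0 ▸ hb)
    have hne₀ : Δ₀.Nonempty := hne.image _
    obtain ⟨f, hf0, hfge⟩ := exists_weak_separation hΔ₀ hne₀ h0
    obtain ⟨w, hw⟩ : ∃ w, f w ≠ 0 := by
      by_contra h
      push_neg at h
      exact hf0 (LinearMap.ext fun x => h x)
    set v : Fin (n + 1) → ℝ := (f w)⁻¹ • w with hvdef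
    have hv : f v = 1 := by
      rw [hvdef, map_smul, smul_eq_mul, inv_mul_cancel₀ hw]
    set p : (Fin (n + 1) → ℝ) →ₗ[ℝ] (Fin (n + 1) → ℝ) := LinearMap.id - f.smulRight v with hpdef
    have hmem : ∀ x, p x ∈ LinearMap.ker f := fun x => by
      simp [hpdef, LinearMap.mem_ker, map_sub, map_smul, hv]
    set π : (Fin (n + 1) → ℝ) →ₗ[ℝ] LinearMap.ker f :=
      LinearMap.codRestrict (LinearMap.ker f) p hmem with hπdef
    have hπapply : ∀ x, ((π x : Fin (n + 1) → ℝ)) = x - f x • v := fun x => rfl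
    have hfr : Module.finrank ℝ (LinearMap.ker f) = n := by
      have hsurj : Function.Surjective f := fun c => ⟨c • v, by rw [map_smul, smul_eq_mul, hv, mul_one]⟩
      have hrn := LinearMap.finrank_range_add_finrank_ker f
      rw [LinearMap.range_eq_top.mpr hsurj, finrank_top] at hrn
      rw [Module.finrank_self, Module.finrank_fintype_fun_eq_card, Fintype.card_fin] at hrn
      omega
    set g : LinearMap.ker f ≃ₗ[ℝ] (Fin n → ℝ) :=
      LinearEquiv.ofFinrankEq _ _
        (by rw [hfr, Module.finrank_fintype_fun_eq_card, Fintype.card_fin]) with hgdef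
    set S : Set (LinearMap.ker f) := (LinearMap.ker f).subtype ⁻¹' Δ₀ with hSdef
    have hS : Convex ℝ S := hΔ₀.linear_preimage _
    set Δ' : Set (Fin n → ℝ) := g '' S with hΔ'def
    have hΔ' : Convex ℝ Δ' := by
      have := hS.linear_image g.toLinearMap
      simpa using this
    have h0' : (0 : Fin n → ℝ) ∉ Δ' := by
      rintro ⟨x, hx, hgx⟩
      have hx0 : x = 0 := g.injective (by simpa using hgx)
      rw [hx0] at hx
      exact h0 hx
    obtain ⟨e', he'⟩ := IH Δ' hΔ' 0 h0'
    set T : (Fin (n + 1) → ℝ) →ₗ[ℝ] (Fin n → ℝ) :=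
      e'.toLinearMap ∘ₗ g.toLinearMap ∘ₗ π with hTdef
    set F : (Fin (n + 1) → ℝ) →ₗ[ℝ] (Fin (n + 1) → ℝ) :=
      LinearMap.pi (Fin.cons f (fun j => LinearMap.proj j ∘ₗ T)) with hFdef
    have hF0 : ∀ x, F x 0 = f x := fun x => by
      simp [hFdef, LinearMap.pi_apply]
    have hFs : ∀ x j, F x (Fin.succ j) = T x j := fun x j => by
      simp [hFdef, LinearMap.pi_apply, Fin.cons_succ]
    have hTval : ∀ x, T x = e' (g (π x)) := fun x => rfl
    have hinj : Function.Injective F := by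
      rw [← LinearMap.ker_eq_bot, LinearMap.ker_eq_bot']
      intro x hx
      have h1 : f x = 0 := by
        have := congrFun hx 0
        rwa [hF0] at this
      have h2 : T x = 0 := funext fun j => by
        have := congrFun hx j.succ
        rwa [hFs] at this
      have h3 : π x = 0 := by
        apply g.injective
        apply e'.injective
        rw [map_zero, map_zero, ← hTval]
        exact h2
      have h4 : (π x : Fin (n + 1) → ℝ) = 0 := by rw [h3]; rfl
      rw [hπapply, h1, zero_smul, sub_zero] at h4
      exact h4
    set e : (Fin (n + 1) → ℝ) ≃ₗ[ℝ] (Fin (n + 1) → ℝ) :=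
      F.linearEquivOfInjective hinj rfl with hedef
    have heap : ∀ x, e x = F x := fun x =>
      LinearMap.linearEquivOfInjective_apply hinj rfl x
    refine ⟨e, fun b hb => ?_⟩
    have hc : b - a ∈ Δ₀ := ⟨b, hb, rfl⟩
    have hfc : (0 : ℝ) ≤ f (b - a) := by
      have := hfge _ hc
      rwa [map_zero] at this
    have key : toLex (0 : Fin (n + 1) → ℝ) < toLex (F (b - a)) := by
      rcases lt_or_eq_of_le hfc with hpos | hzero
      · refine lex_lt_iff'.mpr ⟨0, fun j hj => absurd hj (by simp), ?_⟩
        rw [hF0]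
        simpa using hpos
      · have hker : b - a ∈ LinearMap.ker f := by
          simp [LinearMap.mem_ker, ← hzero]
        have hπc : π (b - a) = ⟨b - a, hker⟩ := Subtype.ext (by
          rw [hπapply, ← hzero, zero_smul, sub_zero])
        have hmem' : g ⟨b - a, hker⟩ ∈ Δ' := ⟨⟨b - a, hker⟩, hc, rfl⟩
        have hlt := he' _ hmem'
        rw [map_zero] at hlt
        have hFeq : F (b - a) = Fin.cons (0 : ℝ) (e' (g (π (b - a)))) := by
          funext i
          induction i using Fin.cases with
          | zero => rw [hF0, ← hzero]; simp
          | succ j => rw [hFs, hTval]; simp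
        have h0eq : (0 : Fin (n + 1) → ℝ) = Fin.cons (0 : ℝ) (0 : Fin n → ℝ) := by
          funext i
          induction i using Fin.cases with
          | zero => simp
          | succ j => simp
        rw [hFeq, h0eq, hπc]
        exact cons_lex_lt 0 hlt
    have hsub : toLex (e b) - toLex (e a) = toLex (F (b - a)) := by
      rw [show toLex (e b) - toLex (e a) = toLex (e b - e a) from rfl, ← map_sub, heap]
    have hpos' : (0 : Lex (Fin (n + 1) → ℝ)) < toLex (e b) - toLex (e a) := by
      rw [hsub]
      exact key
    exact sub_pos.mp hpos'

/-- Separation theorem for arbitrary convex sets: if `Δ ⊆ ℝⁿ` is convex (not necessarily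
closed) and `a ∉ Δ`, then in some coordinate system `Δ` lies in the lexicographic half-space
with vertex `a`: there is a linear automorphism `e` with `toLex (e a) < toLex (e b)` for all
`b ∈ Δ`. -/
theorem lexicographic_separation
    {n : ℕ} (Δ : Set (Fin n → ℝ)) (hΔ : Convex ℝ Δ)
    (a : Fin n → ℝ) (ha : a ∉ Δ) :
    ∃ e : (Fin n → ℝ) ≃ₗ[ℝ] (Fin n → ℝ),
      ∀ b ∈ Δ, toLex (e a) < toLex (e b) := by
  exact lexicographic_separation_aux n Δ hΔ a ha
end

section
/- Let A be any subset of ℚⁿ (viewed as Fin n → ℚ). Then the additive subsemigroup of ℚⁿ generated by A contains 0 if and only if 0 belongs to the convex hull of A over ℚ (equivalently, 0 is a convex combination of finitely many points of A with rational coefficients). -/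
open Finset

lemma sum_mem_addSubsemigroup {M : Type*} [AddCommMonoid M] (S : AddSubsemigroup M)
    {ι : Type*} {s : Finset ι} (hs : s.Nonempty) {f : ι → M}
    (hf : ∀ i ∈ s, f i ∈ S) : ∑ i ∈ s, f i ∈ S := by
  induction hs using Finset.Nonempty.cons_induction with
  | singleton i => simpa using hf i (by simp)
  | cons i s hi hs ih =>
      rw [Finset.sum_cons]
      exact S.add_mem (hf i (by simp)) (ih fun j hj => hf j (by simp [hj]))

lemma nsmul_mem_addSubsemigroup {M : Type*} [AddCommMonoid M] (S : AddSubsemigroup M)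
    {x : M} (hx : x ∈ S) : ∀ k : ℕ, k ≠ 0 → k • x ∈ S := by
  intro k hk
  induction k with
  | zero => exact absurd rfl hk
  | succ m ih =>
      rcases Nat.eq_zero_or_pos m with h | h
      · simpa [h] using hx
      · rw [succ_nsmul]
        exact S.add_mem (ih h.ne') hx

/-- For a subset `A` of `ℚⁿ`, the additive subsemigroup generated by `A` contains `0` if and
only if `0` lies in the convex hull of `A` over `ℚ`. -/
theorem zero_mem_closure_iff_zero_mem_convexHull
    {n : ℕ} (A : Set (Fin n → ℚ)) :
    (0 : Fin n → ℚ) ∈ AddSubsemigroup.closure A ↔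
    (0 : Fin n → ℚ) ∈ convexHull ℚ A := by
  constructor
  · intro h0
    have key : ∀ x ∈ AddSubsemigroup.closure A,
        ∃ q : ℚ, 0 < q ∧ q • x ∈ convexHull ℚ A := by
      intro x hx
      induction hx using AddSubsemigroup.closure_induction with
      | mem y hy => exact ⟨1, one_pos, by simpa using subset_convexHull ℚ A hy⟩
      | add x y hx hy ihx ihy =>
          obtain ⟨q, hq, hqx⟩ := ihx
          obtain ⟨r, hr, hry⟩ := ihy
          have hqr : 0 < q + r := by linarith
          refine ⟨q * r / (q + r), by positivity, ?_⟩
          have hconv := (convex_convexHull ℚ A) hqx hry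
            (a := r / (q + r)) (b := q / (q + r)) (by positivity) (by positivity)
            (by field_simp; ring)
          have : (r / (q + r)) • q • x + (q / (q + r)) • r • y
              = (q * r / (q + r)) • (x + y) := by
            rw [smul_smul, smul_smul, smul_add]
            rw [show r / (q + r) * q = q * r / (q + r) by ring,
              show q / (q + r) * r = q * r / (q + r) by ring]
          rwa [this] at hconv
    obtain ⟨q, hq, hq0⟩ := key 0 h0
    simpa using hq0
  · intro h0
    rw [_root_.convexHull_eq] at h0
    obtain ⟨ι, t, w, z, hw0, hw1, hzA, hcm⟩ := h0
    rw [Finset.centerMass, hw1, inv_one, one_smul] at hcm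
    set d : ℕ := ∏ i ∈ t, (w i).den with hd
    have hdpos : 0 < d := Finset.prod_pos fun i _ => (w i).pos
    set k : ι → ℕ := fun i => (d / (w i).den) * (w i).num.toNat with hk
    have hkq : ∀ i ∈ t, (k i : ℚ) = d * w i := by
      intro i hi
      have hdvd : (w i).den ∣ d := Finset.dvd_prod_of_mem _ hi
      have hnum : ((w i).num.toNat : ℚ) = ((w i).num : ℚ) := by
        exact_mod_cast Int.toNat_of_nonneg (Rat.num_nonneg.mpr (hw0 i hi))
      have hden : ((w i).den : ℚ) ≠ 0 := Nat.cast_ne_zero.mpr (w i).den_nz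
      have h1 : ((w i).num : ℚ) = w i * (w i).den := by
        have h := Rat.num_div_den (w i)
        rwa [div_eq_iff hden] at h
      calc (k i : ℚ) = ((d / (w i).den : ℕ) : ℚ) * ((w i).num : ℚ) := by
            rw [hk]; push_cast [hnum]; ring
        _ = ((d / (w i).den : ℕ) : ℚ) * (w i * (w i).den) := by rw [h1]
        _ = (((d / (w i).den) * (w i).den : ℕ) : ℚ) * w i := by push_cast; ring
        _ = (d : ℚ) * w i := by rw [Nat.div_mul_cancel hdvd]
    have hksum : ∑ i ∈ t, (k i : ℚ) = d := by
      rw [Finset.sum_congr rfl hkq, ← Finset.mul_sum, hw1, mul_one]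
    have hkz : ∑ i ∈ t, (k i) • z i = (0 : Fin n → ℚ) := by
      have : ∑ i ∈ t, (k i : ℚ) • z i = (d : ℚ) • ∑ i ∈ t, w i • z i := by
        rw [Finset.smul_sum]
        refine Finset.sum_congr rfl fun i hi => ?_
        rw [hkq i hi, mul_smul]
      have h2 : ∑ i ∈ t, (k i) • z i = ∑ i ∈ t, (k i : ℚ) • z i :=
        Finset.sum_congr rfl fun i _ => (Nat.cast_smul_eq_nsmul ℚ (k i) (z i)).symm
      rw [h2, this, hcm, smul_zero]
    set s := t.filter fun i => k i ≠ 0 with hs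
    have hsne : s.Nonempty := by
      by_contra hne
      rw [Finset.not_nonempty_iff_eq_empty] at hne
      have : ∑ i ∈ t, (k i : ℚ) = 0 := by
        refine Finset.sum_eq_zero fun i hi => ?_
        have : k i = 0 := by
          by_contra hki
          have : i ∈ s := Finset.mem_filter.mpr ⟨hi, hki⟩
          simp [hne] at this
        simp [this]
      rw [hksum] at this
      exact_mod_cast hdpos.ne' (by exact_mod_cast this)
    have hsum : ∑ i ∈ s, (k i) • z i = (0 : Fin n → ℚ) := by
      rw [← hkz, hs]
      exact Finset.sum_filter_of_ne fun i _ h hki => h (by simp [hki])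
    have hmem : ∑ i ∈ s, (k i) • z i ∈ AddSubsemigroup.closure A := by
      refine sum_mem_addSubsemigroup _ hsne fun i hi => ?_
      rw [hs, Finset.mem_filter] at hi
      exact nsmul_mem_addSubsemigroup _
        (AddSubsemigroup.subset_closure (hzA i hi.1)) (k i) hi.2
    rwa [hsum] at hmem
end

section
/- Let G be an additive subgroup of ℚⁿ (viewed as Fin n → ℚ, embedded coordinatewise into Fin n → ℝ) and let ≻ be a total order on G. Then ≻ is compatible with addition if and only if there exists a linear automorphism e of ℝⁿ such that for all a, b ∈ G, a ≻ b ⇔ toLex(e a) > toLex(e b), where a and b are regarded as points of ℝⁿ; that is, ≻ is compatible with addition exactly when it is induced by some lexicographic order on ℝⁿ. -/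
set_option linter.unusedSectionVars false

open Module Submodule Matrix

section OrderLemmas

variable {α : Type*} [AddCommGroup α] {r : α → α → Prop}
  (hord : IsStrictTotalOrder α r)
  (hcomp : ∀ x y a : α, r x y → r (x + a) (y + a))

namespace OrdAux
include hord hcomp

lemma asymm {a b : α} (h : r a b) : ¬ r b a :=
  fun h' => hord.irrefl a (hord.trans _ _ _ h h')

lemma nr_iff {a b : α} : ¬ r a b ↔ (a = b ∨ r b a) := by
  constructor
  · intro h
    rcases @trichotomous _ r hord.toTrichotomous a b with h' | h' | h'
    · exact absurd h' h
    · exact Or.inl h'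
    · exact Or.inr h'
  · rintro (rfl | h')
    · exact hord.irrefl a
    · exact asymm hord hcomp h'

lemma shift {a b c : α} (h : r a b) : r (a + c) (b + c) := hcomp _ _ _ h

lemma unshift {a b c : α} (h : r (a + c) (b + c)) : r a b := by
  have := hcomp _ _ (-c) h
  simpa using this

lemma add_str {a b c d : α} (h1 : r a b) (h2 : r c d) : r (a + c) (b + d) := by
  have h3 : r (a + c) (b + c) := shift hord hcomp h1
  have h4 : r (b + c) (b + d) := by
    have := hcomp _ _ b h2
    simpa [add_comm] using this
  exact hord.trans _ _ _ h3 h4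

lemma nr_add {a b c d : α} (h1 : ¬ r a b) (h2 : ¬ r c d) : ¬ r (a + c) (b + d) := by
  rcases (nr_iff hord hcomp).mp h1 with rfl | h1'
  · rcases (nr_iff hord hcomp).mp h2 with rfl | h2'
    · exact fun h => hord.irrefl _ h
    · exact asymm hord hcomp (by
        have := hcomp _ _ a h2'
        simpa [add_comm] using this)
  · rcases (nr_iff hord hcomp).mp h2 with rfl | h2'
    · exact asymm hord hcomp (shift hord hcomp h1')
    · exact asymm hord hcomp (add_str hord hcomp h1' h2')

lemma nr_trans {a b c : α} (h1 : ¬ r a b) (h2 : ¬ r b c) : ¬ r a c := by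
  rcases (nr_iff hord hcomp).mp h1 with rfl | h1'
  · exact h2
  · rcases (nr_iff hord hcomp).mp h2 with rfl | h2'
    · exact asymm hord hcomp h1'
    · exact asymm hord hcomp (hord.trans _ _ _ h2' h1')

lemma str_nr_trans {a b c : α} (h1 : r a b) (h2 : ¬ r c b) : r a c := by
  rcases (nr_iff hord hcomp).mp h2 with rfl | h2'
  · exact h1
  · exact hord.trans _ _ _ h1 h2'

lemma nsmul_str {a b : α} (h : r a b) : ∀ m : ℕ, 0 < m → r (m • a) (m • b) := by
  intro m hm
  induction m with
  | zero => omega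
  | succ k ih =>
    rcases Nat.eq_zero_or_pos k with rfl | hk
    · simpa using h
    · have := add_str hord hcomp (ih hk) h
      simpa [succ_nsmul] using this

lemma zsmul_str {a b : α} (h : r a b) {z : ℤ} (hz : 0 < z) : r (z • a) (z • b) := by
  obtain ⟨m, rfl⟩ : ∃ m : ℕ, z = (m : ℤ) := ⟨z.toNat, (Int.toNat_of_nonneg hz.le).symm⟩
  rw [natCast_zsmul, natCast_zsmul]
  exact nsmul_str hord hcomp h _ (by exact_mod_cast hz)

lemma nsmul_nr {a b : α} (h : ¬ r a b) : ∀ m : ℕ, ¬ r (m • a) (m • b) := by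
  intro m
  rcases (nr_iff hord hcomp).mp h with rfl | h'
  · exact fun hh => hord.irrefl _ hh
  · rcases Nat.eq_zero_or_pos m with rfl | hm
    · simpa using fun hh => hord.irrefl _ hh
    · exact asymm hord hcomp (nsmul_str hord hcomp h' m hm)

lemma zsmul_nr {a b : α} (h : ¬ r a b) {z : ℤ} (hz : 0 ≤ z) : ¬ r (z • a) (z • b) := by
  obtain ⟨m, rfl⟩ : ∃ m : ℕ, z = (m : ℤ) := ⟨z.toNat, (Int.toNat_of_nonneg hz).symm⟩
  rw [natCast_zsmul, natCast_zsmul]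
  exact nsmul_nr hord hcomp h m

lemma zsmul_cancel {a b : α} {z : ℤ} (hz : 0 < z) (h : r (z • a) (z • b)) : r a b := by
  by_contra h'
  exact zsmul_nr hord hcomp h' hz.le h

lemma neg_of_pos {a : α} (h : r a 0) : r 0 (-a) := by
  have := hcomp _ _ (-a) h
  simpa using this

lemma pos_of_neg {a : α} (h : r 0 a) : r (-a) 0 := by
  have := hcomp _ _ (-a) h
  simpa using this

lemma zsmul_pos {a : α} (h : r a 0) {z : ℤ} (hz : 0 < z) : r (z • a) 0 := by
  have := zsmul_str hord hcomp h hz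
  simpa using this

lemma zsmul_nonpos {a : α} (h : r a 0) {z : ℤ} (hz : z ≤ 0) : ¬ r (z • a) 0 := by
  rcases lt_or_eq_of_le hz with hz' | rfl
  · have h1 : r ((-z) • a) 0 := zsmul_pos hord hcomp h (by omega)
    have h2 := neg_of_pos hord hcomp h1
    rw [← neg_zsmul, neg_neg] at h2
    exact asymm hord hcomp h2
  · simpa using fun hh => hord.irrefl _ hh

lemma coeff_nonpos {a : α} (h : r a 0) {z : ℤ} (hz : ¬ r (z • a) 0) : z ≤ 0 := by
  by_contra h'
  exact hz (zsmul_pos hord hcomp h (by omega))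

lemma sub_pos_iff {a b : α} : r a b ↔ r (a - b) 0 := by
  constructor
  · intro h; have := hcomp _ _ (-b) h; simpa [sub_eq_add_neg] using this
  · intro h; have := hcomp _ _ b h; simpa [sub_eq_add_neg] using this

end OrdAux
end OrderLemmas

open Module Submodule Matrix

section Holder

variable {α : Type*} [AddCommGroup α] {r : α → α → Prop}
  (hord : IsStrictTotalOrder α r)
  (hcomp : ∀ x y a : α, r x y → r (x + a) (y + a))

include hord hcomp in
open OrdAux in
lemma holder_exists (x₀ : α) (hx₀ : r x₀ 0)
    (hdom : ∀ x : α, ∃ m : ℕ, 0 < m ∧ ¬ r x (m • x₀)) :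
    ∃ f : α → ℝ, (∀ a b : α, f (a + b) = f a + f b) ∧ f x₀ = 1 ∧
      ∀ x : α, r x 0 → 0 ≤ f x := by
  classical
  have hub : ∀ x : α, ∃ M : ℤ, 0 < M ∧ ¬ r x (M • x₀) := by
    intro x
    obtain ⟨m, hm, h⟩ := hdom x
    exact ⟨(m : ℤ), by exact_mod_cast hm, by rwa [natCast_zsmul]⟩
  set S : α → Set ℝ := fun x =>
    {t : ℝ | ∃ p q : ℤ, 0 < q ∧ t = (p : ℝ) / (q : ℝ) ∧ ¬ r (p • x₀) (q • x)} with hS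
  have hne : ∀ x, (S x).Nonempty := by
    intro x
    obtain ⟨M, hM, h⟩ := hub (-x)
    refine ⟨((-M : ℤ) : ℝ) / ((1 : ℤ) : ℝ), -M, 1, one_pos, rfl, ?_⟩
    intro hr
    apply h
    have h2 := hcomp _ _ (M • x₀ - x) hr
    have e1 : (-M) • x₀ + (M • x₀ - x) = -x := by rw [neg_zsmul]; abel
    have e2 : (1:ℤ) • x + (M • x₀ - x) = M • x₀ := by rw [one_zsmul]; abel
    rwa [e1, e2] at h2
  have hbdd : ∀ x, BddAbove (S x) := by
    intro x
    obtain ⟨M, hM, hMx⟩ := hub x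
    refine ⟨(M : ℝ), ?_⟩
    rintro t ⟨p, q, hq, rfl, hpq⟩
    have h1 : ¬ r (q • x) (q • (M • x₀)) := zsmul_nr hord hcomp hMx hq.le
    have h2 : ¬ r (p • x₀) ((q * M) • x₀) := by
      have h3 := nr_trans hord hcomp hpq h1
      rwa [smul_smul] at h3
    have h3 : ¬ r ((p - q * M) • x₀) 0 := by
      intro hr; apply h2
      have h4 := hcomp _ _ ((q * M) • x₀) hr
      have e1 : (p - q * M) • x₀ + (q * M) • x₀ = p • x₀ := by rw [sub_zsmul]; abel
      rwa [e1, zero_add] at h4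
    have h4 : p - q * M ≤ 0 := coeff_nonpos hord hcomp hx₀ h3
    have hq' : (0:ℝ) < (q:ℝ) := by exact_mod_cast hq
    rw [div_le_iff₀ hq']
    have : (p : ℝ) ≤ ((q * M : ℤ) : ℝ) := by exact_mod_cast (by omega : p ≤ q * M)
    push_cast at this ⊢
    linarith
  set f : α → ℝ := fun x => sSup (S x) with hf
  have hmem_le : ∀ {x t}, t ∈ S x → t ≤ f x := fun {x t} ht => le_csSup (hbdd x) ht
  have hrat : ∀ (x : α) (a : ℚ), f x < (a : ℝ) → r (a.num • x₀) ((a.den : ℤ) • x) := by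
    intro x a ha
    by_contra hr
    have hmem : ((a.num : ℝ) / ((a.den : ℤ) : ℝ)) ∈ S x :=
      ⟨a.num, a.den, by exact_mod_cast a.pos, rfl, hr⟩
    have := hmem_le hmem
    rw [Rat.cast_def] at ha
    push_cast at this
    linarith
  have hsum : ∀ {x y t₁ t₂}, t₁ ∈ S x → t₂ ∈ S y → t₁ + t₂ ∈ S (x + y) := by
    rintro x y t₁ t₂ ⟨p₁, q₁, hq₁, rfl, h1⟩ ⟨p₂, q₂, hq₂, rfl, h2⟩
    refine ⟨p₁ * q₂ + p₂ * q₁, q₁ * q₂, mul_pos hq₁ hq₂, ?_, ?_⟩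
    · have hq₁' : ((q₁:ℤ):ℝ) ≠ 0 := by exact_mod_cast hq₁.ne'
      have hq₂' : ((q₂:ℤ):ℝ) ≠ 0 := by exact_mod_cast hq₂.ne'
      push_cast
      field_simp
      try ring
    · have h1' : ¬ r ((q₂ * p₁) • x₀) ((q₂ * q₁) • x) := by
        have := zsmul_nr hord hcomp h1 hq₂.le
        rwa [smul_smul, smul_smul] at this
      have h2' : ¬ r ((q₁ * p₂) • x₀) ((q₁ * q₂) • y) := by
        have := zsmul_nr hord hcomp h2 hq₁.le
        rwa [smul_smul, smul_smul] at this
      have h3 := nr_add hord hcomp h1' h2'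
      have e1 : (q₂ * p₁) • x₀ + (q₁ * p₂) • x₀ = (p₁ * q₂ + p₂ * q₁) • x₀ := by
        rw [← add_zsmul]; ring_nf
      have e2 : (q₂ * q₁) • x + (q₁ * q₂) • y = (q₁ * q₂) • (x + y) := by
        rw [smul_add, mul_comm q₂ q₁]
      rwa [e1, e2] at h3
  have superadd : ∀ x y : α, f x + f y ≤ f (x + y) := by
    intro x y
    have h2 : ∀ t₁ ∈ S x, f y ≤ f (x + y) - t₁ := by
      intro t₁ ht₁
      refine csSup_le (hne y) fun t₂ ht₂ => ?_
      have := hmem_le (hsum ht₁ ht₂)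
      linarith
    have h3 : f x ≤ f (x + y) - f y := by
      refine csSup_le (hne x) fun t₁ ht₁ => ?_
      have := h2 t₁ ht₁
      linarith
    linarith
  have hf0 : f 0 = 0 := by
    apply le_antisymm
    · refine csSup_le (hne 0) ?_
      rintro t ⟨p, q, hq, rfl, hpq⟩
      rw [smul_zero] at hpq
      have := coeff_nonpos hord hcomp hx₀ hpq
      apply div_nonpos_of_nonpos_of_nonneg
      · exact_mod_cast this
      · exact_mod_cast hq.le
    · refine hmem_le ⟨0, 1, one_pos, by norm_num, ?_⟩
      rw [zero_zsmul, smul_zero]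
      exact fun hh => hord.irrefl _ hh
  have hnegge : ∀ x : α, 0 ≤ f x + f (-x) := by
    intro x
    by_contra hcon
    push_neg at hcon
    set s := f x + f (-x) with hs
    obtain ⟨a, ha1, ha2⟩ := exists_rat_btwn (show f x < f x + (-s/2) by linarith)
    obtain ⟨b, hb1, hb2⟩ := exists_rat_btwn (show f (-x) < f (-x) + (-s/2) by linarith)
    have hra := hrat x a ha1
    have hrb := hrat (-x) b hb1
    have h1 : r ((b.den * a.num) • x₀) (((b.den : ℤ) * a.den) • x) := by
      have := zsmul_str hord hcomp hra (show (0:ℤ) < (b.den:ℤ) by exact_mod_cast b.pos)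
      rwa [smul_smul, smul_smul] at this
    have h2 : r (((a.den:ℤ) * b.num) • x₀) (((a.den : ℤ) * b.den) • (-x)) := by
      have := zsmul_str hord hcomp hrb (show (0:ℤ) < (a.den:ℤ) by exact_mod_cast a.pos)
      rwa [smul_smul, smul_smul] at this
    have h3 := add_str hord hcomp h1 h2
    have e1 : ((b.den:ℤ) * a.num) • x₀ + ((a.den:ℤ) * b.num) • x₀
        = ((b.den:ℤ) * a.num + (a.den:ℤ) * b.num) • x₀ := by rw [add_zsmul]
    have e2 : (((b.den:ℤ) * a.den) • x) + (((a.den:ℤ) * b.den) • (-x)) = 0 := by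
      rw [smul_neg, mul_comm (b.den:ℤ) (a.den:ℤ)]
      exact add_neg_cancel _
    rw [e1, e2] at h3
    set N : ℤ := (b.den:ℤ) * a.num + (a.den:ℤ) * b.num with hN
    have hNpos : 0 < N := by
      by_contra h'
      exact zsmul_nonpos hord hcomp hx₀ (not_lt.mp h') h3
    have habpos : (0:ℝ) < (a:ℝ) + (b:ℝ) := by
      have hden : (0:ℝ) < (a.den:ℝ) * (b.den:ℝ) := by
        have := a.pos; have := b.pos; positivity
      have : (a:ℝ) + (b:ℝ) = ((N:ℤ):ℝ) / ((a.den:ℝ) * (b.den:ℝ)) := by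
        rw [Rat.cast_def, Rat.cast_def, hN]
        push_cast
        field_simp
      rw [this]
      apply div_pos _ hden
      exact_mod_cast hNpos
    have : (a:ℝ) + (b:ℝ) < 0 := by linarith
    linarith
  have hnegeq : ∀ x : α, f x + f (-x) = 0 := by
    intro x
    refine le_antisymm ?_ (hnegge x)
    have := superadd x (-x)
    rwa [add_neg_cancel, hf0] at this
  have fadd : ∀ x y : α, f (x + y) = f x + f y := by
    intro x y
    have h1 := superadd x y
    have h2 := superadd (-x) (-y)
    rw [show -x + -y = -(x + y) by abel] at h2
    have e1 := hnegeq x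
    have e2 := hnegeq y
    have e3 := hnegeq (x + y)
    linarith
  have fx₀ : f x₀ = 1 := by
    apply le_antisymm
    · refine csSup_le (hne x₀) ?_
      rintro t ⟨p, q, hq, rfl, hpq⟩
      have h3 : ¬ r ((p - q) • x₀) 0 := by
        intro hr; apply hpq
        have h4 := hcomp _ _ (q • x₀) hr
        have e1 : (p - q) • x₀ + q • x₀ = p • x₀ := by rw [sub_zsmul]; abel
        rwa [e1, zero_add] at h4
      have h4 : p ≤ q := by have := coeff_nonpos hord hcomp hx₀ h3; omega
      rw [div_le_one (by exact_mod_cast hq)]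
      exact_mod_cast h4
    · refine hmem_le ⟨1, 1, one_pos, by norm_num, ?_⟩
      exact fun hh => hord.irrefl _ hh
  have fpos : ∀ x : α, r x 0 → 0 ≤ f x := by
    intro x hx
    refine hmem_le ⟨0, 1, one_pos, by norm_num, ?_⟩
    rw [zero_zsmul, one_zsmul]
    exact OrdAux.asymm hord hcomp hx
  exact ⟨f, fadd, fx₀, fpos⟩

end Holder

section Dominant

variable {n : ℕ} {G : AddSubgroup (Fin n → ℚ)} {r : G → G → Prop}
  (hord : IsStrictTotalOrder G r)
  (hcomp : ∀ x y a : G, r x y → r (x + a) (y + a))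

include hord hcomp in
open OrdAux in
lemma exists_dominant (p₀ : G) (hp₀ : r p₀ 0) :
    ∃ x₀ : G, r x₀ 0 ∧ ∀ x : G, ∃ m : ℕ, 0 < m ∧ ¬ r x (m • x₀) := by
  classical
  by_contra hcon
  push_neg at hcon
  have hsucc : ∀ y : G, r y 0 → ∃ x : G, r x 0 ∧ ∀ m : ℕ, 0 < m → r x (m • y) := by
    intro y hy
    obtain ⟨x, hx⟩ := hcon y hy
    refine ⟨x, ?_, hx⟩
    have h1 := hx 1 one_pos
    rw [one_nsmul] at h1
    exact hord.trans _ _ _ h1 hy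
  choose nxt hnxt1 hnxt2 using hsucc
  let c : ℕ → {x : G // r x 0} := fun k =>
    Nat.rec ⟨p₀, hp₀⟩ (fun _ ih => ⟨nxt ih.1 ih.2, hnxt1 ih.1 ih.2⟩) k
  have hstep : ∀ k, ∀ m : ℕ, 0 < m → r ((c (k+1)).1) (m • (c k).1) := by
    intro k
    exact hnxt2 (c k).1 (c k).2
  have hchain : ∀ i j : ℕ, i < j → ∀ z : ℤ, r ((c j).1) (z • (c i).1) := by
    intro i j
    induction j with
    | zero => intro h; omega
    | succ j ih =>
      intro hij z
      rcases lt_or_ge (0:ℤ) z with hz | hz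
      · rcases Nat.lt_succ_iff_lt_or_eq.mp hij with h | h
        · have h1 : r ((c (j+1)).1) ((1:ℕ) • (c j).1) := hstep j 1 one_pos
          rw [one_nsmul] at h1
          exact hord.trans _ _ _ h1 (ih h z)
        · subst h
          have h2 := hstep i z.toNat (by omega)
          rwa [← natCast_zsmul, Int.toNat_of_nonneg hz.le] at h2
      · have h0 : r ((c (j+1)).1) 0 := (c (j+1)).2
        have h1 : ¬ r (z • (c i).1) 0 := zsmul_nonpos hord hcomp (c i).2 hz
        exact str_nr_trans hord hcomp h0 h1
  let v : Fin (n + 1) → (Fin n → ℚ) := fun i => ((c i.1).1 : Fin n → ℚ)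
  have hindep : LinearIndependent ℚ v := by
    rw [Fintype.linearIndependent_iff]
    intro g hg
    by_contra hgn
    push_neg at hgn
    obtain ⟨i₀, hi₀⟩ := hgn
    set T : Finset (Fin (n + 1)) := Finset.univ.filter (fun i => g i ≠ 0) with hT
    have hTne : T.Nonempty := ⟨i₀, by simp [hT, hi₀]⟩
    set t := T.max' hTne with ht
    have hgt : g t ≠ 0 := by
      have := T.max'_mem hTne
      simpa [hT] using this
    have hgtop : ∀ i, t < i → g i = 0 := by
      intro i hi
      by_contra h
      have hiT : i ∈ T := by simp [hT, h]
      exact absurd (T.le_max' i hiT) (not_le.mpr hi)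
    set N : ℕ := ∏ i, (g i).den with hNdef
    have hNpos : 0 < N := Finset.prod_pos (fun i _ => (g i).pos)
    have hzex : ∀ i, ∃ zz : ℤ, (zz : ℚ) = g i * N := by
      intro i
      obtain ⟨M, hM⟩ := Finset.dvd_prod_of_mem (fun i => (g i).den) (Finset.mem_univ i)
      refine ⟨(g i).num * M, ?_⟩
      rw [← hNdef] at hM
      rw [hM]
      push_cast
      rw [← mul_assoc, Rat.mul_den_eq_num]
    choose z hzspec using hzex
    have hsum0 : (∑ i, z i • (c i.1).1) = (0 : G) := by
      apply Subtype.ext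
      push_cast
      have he : ∀ i : Fin (n+1), (z i : ℤ) • v i = (N : ℚ) • (g i • v i) := by
        intro i
        rw [smul_smul, ← Int.cast_smul_eq_zsmul ℚ, hzspec i, mul_comm]
      calc (∑ i, z i • v i) = ∑ i, (N:ℚ) • (g i • v i) := Finset.sum_congr rfl fun i _ => he i
        _ = (N:ℚ) • ∑ i, g i • v i := (Finset.smul_sum).symm
        _ = 0 := by rw [hg, smul_zero]
    set ct := (c t.1).1 with hct
    have hctpos : r ct 0 := (c t.1).2
    set Sm : AddSubgroup G :=
      { carrier := {x : G | ∀ w : ℤ, r ct (w • x)}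
        zero_mem' := by
          intro w; rw [smul_zero]; exact hctpos
        add_mem' := by
          intro x y hx hy w
          have h3 := add_str hord hcomp (hx (2 * w)) (hy (2 * w))
          have e1 : (2 * w) • x + (2 * w) • y = (2:ℤ) • (w • (x + y)) := by
            rw [smul_smul, smul_add]
          rw [e1, show ct + ct = (2:ℤ) • ct from (two_zsmul ct).symm] at h3
          exact zsmul_cancel hord hcomp two_pos h3
        neg_mem' := by
          intro x hx w
          have h4 := hx (-w)
          rwa [show (-w) • x = w • (-x) by rw [zsmul_neg, neg_zsmul]] at h4 } with hSm
    have hmem : ∀ i : Fin (n+1), i < t → (c i.1).1 ∈ Sm := by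
      intro i hi w
      exact hchain i.1 t.1 hi w
    have hsum_mem : (∑ i ∈ Finset.univ.erase t, z i • (c i.1).1) ∈ Sm := by
      apply AddSubgroup.sum_mem
      intro i hi
      rcases lt_trichotomy i t with h | h | h
      · exact AddSubgroup.zsmul_mem Sm (hmem i h) _
      · exact absurd h (Finset.ne_of_mem_erase hi)
      · have hgi : g i = 0 := hgtop i h
        have hzi : z i = 0 := by
          have := hzspec i
          rw [hgi, zero_mul] at this
          exact_mod_cast this
        rw [hzi, zero_zsmul]
        exact Sm.zero_mem
    have hzt_mem : z t • ct ∈ Sm := by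
      have he : z t • ct = - ∑ i ∈ Finset.univ.erase t, z i • (c i.1).1 := by
        have h5 := hsum0
        rw [← Finset.add_sum_erase _ _ (Finset.mem_univ t)] at h5
        exact eq_neg_of_add_eq_zero_left h5
      rw [he]
      exact Sm.neg_mem hsum_mem
    have hzt0 : z t = 0 := by
      by_contra hzt
      set w : ℤ := if 0 < z t then 1 else -1 with hw
      have hwz : 1 ≤ w * z t := by
        rcases lt_trichotomy (z t) 0 with h | h | h
        · rw [hw, if_neg (by omega)]; omega
        · exact absurd h hzt
        · rw [hw, if_pos h]; omega
      have h5 := hzt_mem w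
      rw [smul_smul] at h5
      have h6 : r ((1 - (w * z t)) • ct) 0 := by
        have h7 := hcomp _ _ (-((w * z t) • ct)) h5
        have e1 : ct + -((w * z t) • ct) = (1 - w * z t) • ct := by
          rw [sub_zsmul, one_zsmul]; try abel
        have e2 : (w * z t) • ct + -((w * z t) • ct) = 0 := add_neg_cancel _
        rwa [e1, e2] at h7
      exact zsmul_nonpos hord hcomp hctpos (by omega) h6
    apply hgt
    have h8 := hzspec t
    rw [hzt0] at h8
    have h9 : g t * N = 0 := by exact_mod_cast h8.symm
    rcases mul_eq_zero.mp h9 with h | h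
    · exact h
    · exact absurd h (by exact_mod_cast hNpos.ne')
  have hcard := hindep.fintype_card_le_finrank
  rw [Module.finrank_fin_fun] at hcard
  simp at hcard

end Dominant

section Extend

variable {n : ℕ}

/-- coordinatewise embedding of `ℚⁿ` into `ℝⁿ` -/
def embR {n : ℕ} (x : Fin n → ℚ) : Fin n → ℝ := fun i => (x i : ℝ)

lemma embR_add (x y : Fin n → ℚ) : embR (x + y) = embR x + embR y := by
  funext i; simp [embR]

lemma exists_vec (G : AddSubgroup (Fin n → ℚ)) (f : G → ℝ)
    (hadd : ∀ a b : G, f (a + b) = f a + f b) :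
    ∃ u : Fin n → ℝ, ∀ g : G, u ⬝ᵥ embR (g : Fin n → ℚ) = f g := by
  classical
  set fh : G →+ ℝ := AddMonoidHom.mk' f hadd with hfh
  set V : Submodule ℚ (Fin n → ℚ) := Submodule.span ℚ (G : Set (Fin n → ℚ)) with hV
  have hnatmem : ∀ (y : Fin n → ℚ), y ∈ G → ∀ m : ℕ, (m : ℚ) • y ∈ G := by
    intro y hy m
    rw [Nat.cast_smul_eq_nsmul]
    exact AddSubgroup.nsmul_mem G hy m
  have hintmem : ∀ (y : Fin n → ℚ), y ∈ G → ∀ m : ℤ, (m : ℚ) • y ∈ G := by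
    intro y hy m
    rw [Int.cast_smul_eq_zsmul]
    exact AddSubgroup.zsmul_mem G hy m
  have exN : ∀ x ∈ V, ∃ N : ℕ, 0 < N ∧ (N : ℚ) • x ∈ G := by
    intro x hx
    induction hx using Submodule.span_induction with
    | mem x h => exact ⟨1, one_pos, by simpa using h⟩
    | zero => exact ⟨1, one_pos, by simp [AddSubgroup.zero_mem]⟩
    | add x y hx hy ihx ihy =>
      obtain ⟨N₁, h₁, hN₁⟩ := ihx
      obtain ⟨N₂, h₂, hN₂⟩ := ihy
      refine ⟨N₁ * N₂, Nat.mul_pos h₁ h₂, ?_⟩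
      rw [smul_add]
      have e1 : ((N₁ * N₂ : ℕ) : ℚ) • x = (N₂ : ℚ) • ((N₁ : ℚ) • x) := by
        rw [smul_smul]; push_cast; ring_nf
      have e2 : ((N₁ * N₂ : ℕ) : ℚ) • y = (N₁ : ℚ) • ((N₂ : ℚ) • y) := by
        rw [smul_smul]; push_cast; ring_nf
      rw [e1, e2]
      exact AddSubgroup.add_mem G (hnatmem _ hN₁ N₂) (hnatmem _ hN₂ N₁)
    | smul a x hx ihx =>
      obtain ⟨N, hN, hNx⟩ := ihx
      refine ⟨N * a.den, Nat.mul_pos hN a.pos, ?_⟩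
      have e1 : ((N * a.den : ℕ) : ℚ) • (a • x) = (a.num : ℚ) • ((N : ℚ) • x) := by
        rw [smul_smul, smul_smul]
        congr 1
        push_cast
        rw [mul_assoc, mul_comm ((a.den:ℚ)) a, Rat.mul_den_eq_num, mul_comm]
      rw [e1]
      exact hintmem _ hNx a.num
  choose Nf hNfpos hNfmem using exN
  have key : ∀ (x : Fin n → ℚ) (N M : ℕ), 0 < N → 0 < M →
      ∀ (h1 : (N:ℚ) • x ∈ G) (h2 : (M:ℚ) • x ∈ G),
      (M:ℝ) * f ⟨(N:ℚ) • x, h1⟩ = (N:ℝ) * f ⟨(M:ℚ) • x, h2⟩ := by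
    intro x N M hN hM h1 h2
    have hmem : ((N * M : ℕ) : ℚ) • x ∈ G := by
      have := hnatmem _ h1 M
      rwa [smul_smul, ← Nat.cast_mul, mul_comm M N] at this
    have e1 : (M:ℝ) * f ⟨(N:ℚ) • x, h1⟩ = f ⟨((N * M : ℕ):ℚ) • x, hmem⟩ := by
      have h3 := AddMonoidHom.map_nsmul fh M ⟨(N:ℚ) • x, h1⟩
      have h4 : (M • ⟨(N:ℚ) • x, h1⟩ : G) = ⟨((N * M : ℕ):ℚ) • x, hmem⟩ := by
        apply Subtype.ext
        push_cast
        rw [← Nat.cast_smul_eq_nsmul ℚ, smul_smul]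
        try push_cast
        try ring_nf
      rw [h4] at h3
      have : fh ⟨((N*M:ℕ):ℚ) • x, hmem⟩ = M • fh ⟨(N:ℚ) • x, h1⟩ := h3
      simpa [hfh, nsmul_eq_mul] using this.symm
    have e2 : (N:ℝ) * f ⟨(M:ℚ) • x, h2⟩ = f ⟨((N * M : ℕ):ℚ) • x, hmem⟩ := by
      have h3 := AddMonoidHom.map_nsmul fh N ⟨(M:ℚ) • x, h2⟩
      have h4 : (N • ⟨(M:ℚ) • x, h2⟩ : G) = ⟨((N * M : ℕ):ℚ) • x, hmem⟩ := by
        apply Subtype.ext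
        push_cast
        rw [← Nat.cast_smul_eq_nsmul ℚ, smul_smul]
        try push_cast
        try ring_nf
      rw [h4] at h3
      have : fh ⟨((N*M:ℕ):ℚ) • x, hmem⟩ = N • fh ⟨(M:ℚ) • x, h2⟩ := h3
      simpa [hfh, nsmul_eq_mul] using this.symm
    rw [e1, e2]
  set F : V → ℝ := fun v => f ⟨(Nf v.1 v.2 : ℚ) • v.1, hNfmem v.1 v.2⟩ / (Nf v.1 v.2 : ℝ)
    with hF
  have Fspec : ∀ (x : Fin n → ℚ) (hx : x ∈ V) (N : ℕ) (hN : 0 < N)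
      (h : (N:ℚ) • x ∈ G), F ⟨x, hx⟩ = f ⟨(N:ℚ) • x, h⟩ / (N:ℝ) := by
    intro x hx N hN h
    have hk := key x (Nf x hx) N (hNfpos x hx) hN (hNfmem x hx) h
    rw [hF]
    have hNf' : ((Nf x hx : ℕ):ℝ) ≠ 0 := by exact_mod_cast (hNfpos x hx).ne'
    have hN' : ((N:ℕ):ℝ) ≠ 0 := by exact_mod_cast hN.ne'
    field_simp
    linarith [hk]
  have Fadd : ∀ v w : V, F (v + w) = F v + F w := by
    rintro ⟨x, hx⟩ ⟨y, hy⟩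
    set N₁ := Nf x hx with hN₁
    set N₂ := Nf y hy with hN₂
    have hp₁ := hNfpos x hx
    have hp₂ := hNfpos y hy
    have hm₁ : ((N₁ * N₂ : ℕ):ℚ) • x ∈ G := by
      have := hnatmem _ (hNfmem x hx) N₂
      rwa [smul_smul, ← Nat.cast_mul, mul_comm N₂ N₁] at this
    have hm₂ : ((N₁ * N₂ : ℕ):ℚ) • y ∈ G := by
      have := hnatmem _ (hNfmem y hy) N₁
      rwa [smul_smul, ← Nat.cast_mul] at this
    have hms : ((N₁ * N₂ : ℕ):ℚ) • (x + y) ∈ G := by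
      rw [smul_add]
      exact AddSubgroup.add_mem G hm₁ hm₂
    have hNN : 0 < N₁ * N₂ := Nat.mul_pos hp₁ hp₂
    have e0 : ((⟨x, hx⟩ : V) + ⟨y, hy⟩) = (⟨x + y, V.add_mem hx hy⟩ : V) := rfl
    rw [e0, Fspec _ _ _ hNN hms, Fspec _ _ _ hNN hm₁, Fspec _ _ _ hNN hm₂]
    have e1 : (⟨((N₁ * N₂:ℕ):ℚ) • (x + y), hms⟩ : G)
        = ⟨((N₁ * N₂:ℕ):ℚ) • x, hm₁⟩ + ⟨((N₁ * N₂:ℕ):ℚ) • y, hm₂⟩ := by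
      apply Subtype.ext
      push_cast
      rw [smul_add]
    rw [e1, hadd]
    ring
  set Fh : V →+ ℝ := AddMonoidHom.mk' F Fadd with hFh
  have Fq : ∀ (q : ℚ) (v : V), F (q • v) = (q : ℝ) * F v := by
    intro q v
    have hb : ((q.den : ℤ) • (q • v) : V) = (q.num : ℤ) • v := by
      apply Subtype.ext
      rw [← Int.cast_smul_eq_zsmul ℚ ((q.den:ℤ)), ← Int.cast_smul_eq_zsmul ℚ q.num]
      rw [Submodule.coe_smul, Submodule.coe_smul, Submodule.coe_smul]
      push_cast
      rw [smul_smul, mul_comm (q.den:ℚ) q, Rat.mul_den_eq_num]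
    have h2 : F ((q.den:ℤ) • (q • v)) = (q.den:ℝ) * F (q • v) := by
      have h := map_zsmul Fh (q.den:ℤ) (q • v)
      have h' : F ((q.den:ℤ) • (q • v)) = (q.den:ℤ) • F (q • v) := h
      rw [h']
      rw [zsmul_eq_mul]
      try push_cast
      try ring
    have h3 : F ((q.num:ℤ) • v) = (q.num:ℝ) * F v := by
      have h := map_zsmul Fh (q.num:ℤ) v
      have h' : F ((q.num:ℤ) • v) = (q.num:ℤ) • F v := h
      rw [h', zsmul_eq_mul]
      try push_cast
      try ring
    have h4 : (q.den:ℝ) * F (q • v) = (q.num:ℝ) * F v := by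
      rw [← h2, hb, h3]
    have hden : ((q.den:ℕ):ℝ) ≠ 0 := by exact_mod_cast q.pos.ne'
    rw [Rat.cast_def]
    field_simp at h4 ⊢
    linarith [h4]
  obtain ⟨W, hW⟩ := Submodule.exists_isCompl V
  set pr := V.linearProjOfIsCompl W hW with hpr
  set u : Fin n → ℝ := fun i => F (pr (Pi.single i 1)) with hu
  have claim : ∀ x : Fin n → ℚ, F (pr x) = ∑ i, (x i : ℝ) * u i := by
    intro x
    conv_lhs => rw [pi_eq_sum_univ x]
    have hsingle : ∀ i : Fin n, (fun j => if i = j then (1:ℚ) else 0) = Pi.single i 1 := by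
      intro i; funext j; simp [Pi.single_apply, eq_comm]
    rw [map_sum pr]
    have hFsum : F (∑ i, pr (x i • fun j => if i = j then (1:ℚ) else 0))
        = ∑ i, F (pr (x i • fun j => if i = j then (1:ℚ) else 0)) := by
      have := map_sum Fh (fun i => pr (x i • fun j => if i = j then (1:ℚ) else 0)) Finset.univ
      exact this
    rw [hFsum]
    refine Finset.sum_congr rfl fun i _ => ?_
    rw [_root_.map_smul pr, Fq, hsingle i]
  refine ⟨u, fun g => ?_⟩
  have hgV : (g : Fin n → ℚ) ∈ V := Submodule.subset_span g.2
  have hπ : pr (g : Fin n → ℚ) = ⟨(g : Fin n → ℚ), hgV⟩ := by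
    have := Submodule.linearProjOfIsCompl_apply_left hW ⟨(g : Fin n → ℚ), hgV⟩
    exact this
  have hFg : F ⟨(g : Fin n → ℚ), hgV⟩ = f g := by
    have h1 : ((1:ℕ):ℚ) • (g : Fin n → ℚ) ∈ G := by simpa using g.2
    rw [Fspec _ hgV 1 one_pos h1]
    have : (⟨((1:ℕ):ℚ) • (g : Fin n → ℚ), h1⟩ : G) = g := by
      apply Subtype.ext; simp
    rw [this]
    simp
  have := claim (g : Fin n → ℚ)
  rw [hπ, hFg] at this
  rw [this]
  simp only [dotProduct, embR]
  exact Finset.sum_congr rfl fun i _ => mul_comm _ _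

end Extend

section Lexpos

variable {n : ℕ}

def lexpos {n k : ℕ} (u : Fin k → (Fin n → ℝ)) (x : Fin n → ℝ) : Prop :=
  ∃ j, (∀ i, i < j → u i ⬝ᵥ x = 0) ∧ 0 < u j ⬝ᵥ x

lemma lexpos_cons {k : ℕ} (c : Fin n → ℝ) (u : Fin k → (Fin n → ℝ)) (x : Fin n → ℝ) :
    lexpos (Fin.cons c u) x ↔ (0 < c ⬝ᵥ x ∨ (c ⬝ᵥ x = 0 ∧ lexpos u x)) := by
  constructor
  · rintro ⟨j, h0, hj⟩
    rcases Fin.eq_zero_or_eq_succ j with rfl | ⟨i, rfl⟩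
    · left; simpa using hj
    · right
      refine ⟨by simpa using h0 0 (Fin.succ_pos i), i, fun i' hi' => ?_, by simpa using hj⟩
      have := h0 i'.succ (by simpa [Fin.succ_lt_succ_iff] using hi')
      simpa using this
  · rintro (h | ⟨h0, j, hs, hj⟩)
    · exact ⟨0, fun i hi => absurd hi (by simp), by simpa using h⟩
    · refine ⟨j.succ, ?_, by simpa using hj⟩
      intro i hi
      rcases Fin.eq_zero_or_eq_succ i with rfl | ⟨i', rfl⟩
      · simpa using h0
      · have hi' : i' < j := by simpa [Fin.succ_lt_succ_iff] using hi
        simpa using hs i' hi'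

end Lexpos

section MainRec

variable {n : ℕ}

open OrdAux in
lemma main_rec (d : ℕ) :
    ∀ (G : AddSubgroup (Fin n → ℚ)) (r : G → G → Prop),
      IsStrictTotalOrder G r → (∀ x y a : G, r x y → r (x + a) (y + a)) →
      Module.finrank ℚ (Submodule.span ℚ (G : Set (Fin n → ℚ))) ≤ d →
      ∃ (k : ℕ) (u : Fin k → (Fin n → ℝ)) (gv : Fin k → G),
        (∀ g : G, r g 0 ↔ lexpos u (embR (g : Fin n → ℚ))) ∧
        (∀ j, u j ⬝ᵥ embR ((gv j : G) : Fin n → ℚ) = 1) ∧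
        (∀ j' j, j' < j → u j' ⬝ᵥ embR ((gv j : G) : Fin n → ℚ) = 0) := by
  induction d with
  | zero =>
    intro G r hord hcomp hrank
    refine ⟨0, Fin.elim0, Fin.elim0, ?_, fun j => j.elim0, fun j' _ _ => j'.elim0⟩
    intro g
    have hbot : Submodule.span ℚ (G : Set (Fin n → ℚ)) = ⊥ := by
      rw [← Submodule.finrank_eq_zero (R := ℚ)]
      omega
    have hg0 : g = 0 := by
      have h1 : (g : Fin n → ℚ) ∈ (⊥ : Submodule ℚ (Fin n → ℚ)) :=
        hbot ▸ Submodule.subset_span g.2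
      have h2 : (g : Fin n → ℚ) = 0 := by simpa using h1
      exact Subtype.ext h2
    subst hg0
    constructor
    · intro h; exact absurd h (hord.irrefl 0)
    · rintro ⟨j, -⟩; exact j.elim0
  | succ d ih =>
    intro G r hord hcomp hrank
    by_cases hP : ∃ g : G, r g 0
    · obtain ⟨p₀, hp₀⟩ := hP
      obtain ⟨x₀, hx₀, hdom⟩ := exists_dominant hord hcomp p₀ hp₀
      obtain ⟨f, fadd, fx₀, fpos⟩ := holder_exists hord hcomp x₀ hx₀ hdom
      have f0 : f 0 = 0 := by have := fadd 0 0; simpa using this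
      have fneg : ∀ g : G, f (-g) = - f g := by
        intro g; have := fadd g (-g); rw [add_neg_cancel, f0] at this; linarith
      have fnonpos : ∀ g : G, ¬ r g 0 → f g ≤ 0 := by
        intro g hg
        rcases (nr_iff hord hcomp).mp hg with rfl | h
        · simp [f0]
        · have h1 : r (-g) 0 := pos_of_neg hord hcomp h
          have h2 := fpos _ h1
          rw [fneg] at h2; linarith
      obtain ⟨u₁, hu₁⟩ := exists_vec G f fadd
      set K : AddSubgroup (Fin n → ℚ) :=
        { carrier := {x | ∃ h : x ∈ G, f ⟨x, h⟩ = 0}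
          zero_mem' := ⟨G.zero_mem, by
            have : (⟨0, G.zero_mem⟩ : G) = 0 := rfl
            rw [this, f0]⟩
          add_mem' := by
            rintro x y ⟨hx, hfx⟩ ⟨hy, hfy⟩
            refine ⟨G.add_mem hx hy, ?_⟩
            have e : (⟨x + y, G.add_mem hx hy⟩ : G) = ⟨x, hx⟩ + ⟨y, hy⟩ := rfl
            rw [e, fadd, hfx, hfy, add_zero]
          neg_mem' := by
            rintro x ⟨hx, hfx⟩
            refine ⟨G.neg_mem hx, ?_⟩
            have e : (⟨-x, G.neg_mem hx⟩ : G) = -(⟨x, hx⟩ : G) := rfl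
            rw [e, fneg, hfx, neg_zero] } with hK
      have hKG : K ≤ G := fun x hx => hx.1
      set r' : K → K → Prop :=
        fun a b => r (AddSubgroup.inclusion hKG a) (AddSubgroup.inclusion hKG b) with hr'
      have hord' : IsStrictTotalOrder K r' :=
        { trichotomous := by
            intro a b h1 h2
            exact AddSubgroup.inclusion_injective hKG (hord.trichotomous _ _ h1 h2)
          irrefl := fun a h => hord.irrefl _ h
          trans := fun a b c h1 h2 => hord.trans _ _ _ h1 h2 }
      have hcomp' : ∀ x y a : K, r' x y → r' (x + a) (y + a) := by
        intro x y a h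
        have h2 := hcomp _ _ (AddSubgroup.inclusion hKG a) h
        simp only [hr', map_add]
        exact h2
      have hrankK : Module.finrank ℚ (Submodule.span ℚ (K : Set (Fin n → ℚ))) ≤ d := by
        set L : (Fin n → ℚ) →ₗ[ℚ] ℝ :=
          { toFun := fun x => u₁ ⬝ᵥ embR x
            map_add' := by
              intro x y
              rw [embR_add, dotProduct_add]
            map_smul' := by
              intro q x
              have e : embR (q • x) = (q : ℝ) • embR x := by
                funext i
                simp [embR, Rat.smul_def, smul_eq_mul]
              rw [e, dotProduct_smul]
              simp [Rat.smul_def, smul_eq_mul] } with hL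
        have hKker : (K : Set (Fin n → ℚ)) ⊆ (LinearMap.ker L : Set (Fin n → ℚ)) := by
          rintro x ⟨hx, hfx⟩
          have : L x = f ⟨x, hx⟩ := hu₁ ⟨x, hx⟩
          simp only [SetLike.mem_coe, LinearMap.mem_ker]
          rw [this, hfx]
        have hspanker : Submodule.span ℚ (K : Set (Fin n → ℚ)) ≤ LinearMap.ker L :=
          Submodule.span_le.mpr hKker
        have hx₀not : (x₀ : Fin n → ℚ) ∉ Submodule.span ℚ (K : Set (Fin n → ℚ)) := by
          intro h
          have h1 : L (x₀ : Fin n → ℚ) = 0 := hspanker h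
          have h2 : L (x₀ : Fin n → ℚ) = f x₀ := hu₁ x₀
          rw [h2, fx₀] at h1
          norm_num at h1
        have hlt : Submodule.span ℚ (K : Set (Fin n → ℚ))
            < Submodule.span ℚ (G : Set (Fin n → ℚ)) := by
          refine lt_of_le_of_ne (Submodule.span_mono (fun x hx => hKG hx)) ?_
          intro h
          exact hx₀not (h ▸ Submodule.subset_span x₀.2)
        have := Submodule.finrank_lt_finrank_of_lt hlt
        omega
      obtain ⟨k', u', gv', hA, hB, hC⟩ := ih K r' hord' hcomp' hrankK
      refine ⟨k' + 1, Fin.cons u₁ u',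
        Fin.cons x₀ (fun j => AddSubgroup.inclusion hKG (gv' j)), ?_, ?_, ?_⟩
      · intro g
        rw [lexpos_cons]
        have hdot : u₁ ⬝ᵥ embR (g : Fin n → ℚ) = f g := hu₁ g
        rcases lt_trichotomy (f g) 0 with hf | hf | hf
        · constructor
          · intro h; exact absurd (fpos g h) (by linarith)
          · rintro (h | ⟨h0, -⟩)
            · rw [hdot] at h; linarith
            · rw [hdot] at h0; linarith
        · have hgK : (g : Fin n → ℚ) ∈ K := ⟨g.2, by rw [Subtype.coe_eta]; exact hf⟩
          have hincl : AddSubgroup.inclusion hKG (⟨(g : Fin n → ℚ), hgK⟩ : K) = g :=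
            Subtype.ext rfl
          have hembK : embR (((⟨(g : Fin n → ℚ), hgK⟩ : K) : K) : Fin n → ℚ)
              = embR (g : Fin n → ℚ) := rfl
          constructor
          · intro h
            right
            refine ⟨by rw [hdot, hf], ?_⟩
            have hr'0 : r' ⟨(g : Fin n → ℚ), hgK⟩ 0 := by
              show r _ _
              rw [map_zero, hincl]
              exact h
            exact (hA ⟨(g : Fin n → ℚ), hgK⟩).mp hr'0
          · rintro (h | ⟨-, hlp⟩)
            · rw [hdot, hf] at h; exact absurd h (lt_irrefl 0)
            · have hr'0 := (hA ⟨(g : Fin n → ℚ), hgK⟩).mpr hlp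
              have : r (AddSubgroup.inclusion hKG ⟨(g : Fin n → ℚ), hgK⟩)
                  (AddSubgroup.inclusion hKG 0) := hr'0
              rwa [map_zero, hincl] at this
        · constructor
          · intro _
            left
            rw [hdot]; exact hf
          · intro _
            by_contra h'
            have := fnonpos g h'
            linarith
      · intro j
        rcases Fin.eq_zero_or_eq_succ j with rfl | ⟨i, rfl⟩
        · simpa [fx₀] using hu₁ x₀
        · simpa using hB i
      · intro j' j hj
        rcases Fin.eq_zero_or_eq_succ j with rfl | ⟨i, rfl⟩
        · exact absurd hj (by simp)
        · rcases Fin.eq_zero_or_eq_succ j' with rfl | ⟨i', rfl⟩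
          · obtain ⟨hmemG, hf0⟩ := (gv' i).2
            have h1 : u₁ ⬝ᵥ embR (((gv' i) : K) : Fin n → ℚ) = 0 := by
              have h2 := hu₁ ⟨(((gv' i) : K) : Fin n → ℚ), hmemG⟩
              rw [h2, hf0]
            have hco : ((AddSubgroup.inclusion hKG (gv' i) : G) : Fin n → ℚ)
                = (((gv' i) : K) : Fin n → ℚ) := rfl
            simpa [hco] using h1
          · have hi' : i' < i := by simpa [Fin.succ_lt_succ_iff] using hj
            simpa using hC i' i hi'
    · refine ⟨0, Fin.elim0, Fin.elim0, ?_, fun j => j.elim0, fun j' _ _ => j'.elim0⟩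
      intro g
      constructor
      · intro h; exact absurd ⟨g, h⟩ hP
      · rintro ⟨j, -⟩; exact j.elim0

end MainRec

section Assembly

variable {n : ℕ}

lemma sum_dot {ι : Type*} (s : Finset ι) (v : ι → Fin n → ℝ) (w : Fin n → ℝ) :
    (∑ i ∈ s, v i) ⬝ᵥ w = ∑ i ∈ s, v i ⬝ᵥ w := by
  classical
  induction s using Finset.induction with
  | empty => simp [dotProduct]
  | insert _ _ h ih => rw [Finset.sum_insert h, Finset.sum_insert h, add_dotProduct, ih]

lemma indep_of_triangular {k : ℕ} (u : Fin k → (Fin n → ℝ)) (x : Fin k → (Fin n → ℝ))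
    (hB : ∀ j, u j ⬝ᵥ x j = 1) (hC : ∀ j' j, j' < j → u j' ⬝ᵥ x j = 0) :
    LinearIndependent ℝ u := by
  classical
  rw [Fintype.linearIndependent_iff]
  intro g hg
  by_contra hne
  push_neg at hne
  obtain ⟨i₀, hi₀⟩ := hne
  set T : Finset (Fin k) := Finset.univ.filter (fun j => g j ≠ 0) with hT
  have hTne : T.Nonempty := ⟨i₀, by simp [hT, hi₀]⟩
  set t := T.max' hTne with ht
  have hgt : g t ≠ 0 := by
    have := T.max'_mem hTne
    simpa [hT] using this
  have hgtop : ∀ j, t < j → g j = 0 := by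
    intro j hj
    by_contra h
    exact absurd (T.le_max' j (by simp [hT, h])) (not_le.mpr hj)
  have hsum : ∑ j, g j * (u j ⬝ᵥ x t) = 0 := by
    have h2 : (∑ j, g j • u j) ⬝ᵥ x t = 0 := by rw [hg, zero_dotProduct]
    rw [sum_dot] at h2
    simpa [smul_dotProduct, smul_eq_mul] using h2
  have hsum2 : ∑ j, g j * (u j ⬝ᵥ x t) = g t := by
    rw [← Finset.add_sum_erase _ _ (Finset.mem_univ t), hB t, mul_one]
    rw [Finset.sum_eq_zero, add_zero]
    intro j hj
    rcases lt_trichotomy j t with h | h | h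
    · rw [hC j t h, mul_zero]
    · exact absurd h (Finset.ne_of_mem_erase hj)
    · rw [hgtop j h, zero_mul]
  exact hgt (by rw [← hsum2, hsum])

lemma exists_equiv {k : ℕ} (u : Fin k → (Fin n → ℝ)) (hu : LinearIndependent ℝ u) :
    ∃ e : (Fin n → ℝ) ≃ₗ[ℝ] (Fin n → ℝ), ∀ (x : Fin n → ℝ) (i : Fin n) (h : (i : ℕ) < k),
      e x i = u ⟨(i : ℕ), h⟩ ⬝ᵥ x := by
  classical
  -- dual functionals
  set D : (Fin n → ℝ) →ₗ[ℝ] ((Fin n → ℝ) →ₗ[ℝ] ℝ) :=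
    { toFun := fun c =>
        { toFun := fun x => c ⬝ᵥ x
          map_add' := fun x y => dotProduct_add c x y
          map_smul' := fun a x => by simp [dotProduct_smul] }
      map_add' := fun c c' => by
        ext x
        simp [add_dotProduct]
      map_smul' := fun a c => by
        ext x
        simp [smul_dotProduct] } with hD
  have hDinj : LinearMap.ker D = ⊥ := by
    rw [LinearMap.ker_eq_bot']
    intro c hc
    funext i
    have := congrArg (fun φ => φ (Pi.single i 1)) hc
    simpa [hD, dotProduct_single] using this
  set φ : Fin k → ((Fin n → ℝ) →ₗ[ℝ] ℝ) := fun j => D (u j) with hφ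
  have hφindep : LinearIndependent ℝ φ := hu.map' D hDinj
  set W : Submodule ℝ ((Fin n → ℝ) →ₗ[ℝ] ℝ) := Submodule.span ℝ (Set.range φ) with hW
  obtain ⟨W', hWc⟩ := Submodule.exists_isCompl W
  set m := Module.finrank ℝ W' with hm
  haveI : Module.Free ℝ W' := Module.Free.of_divisionRing ℝ W'
  set bW' := Module.finBasis ℝ W' with hbW'
  set ψ : Fin m → ((Fin n → ℝ) →ₗ[ℝ] ℝ) := fun i => (bW' i : _) with hψ
  have hψindep : LinearIndependent ℝ ψ :=
    bW'.linearIndependent.map_injOn W'.subtype W'.injective_subtype.injOn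
  have hψspan : Submodule.span ℝ (Set.range ψ) = W' := by
    have h1 : Submodule.span ℝ (Set.range (fun i => (bW' i : W'))) = (⊤ : Submodule ℝ W') :=
      bW'.span_eq
    have h2 : Submodule.map W'.subtype (Submodule.span ℝ (Set.range fun i => bW' i)) =
        Submodule.span ℝ (Set.range ψ) := by
      rw [Submodule.map_span]
      congr 1
      rw [← Set.range_comp]
      rfl
    rw [h1] at h2
    rw [← h2, Submodule.map_subtype_top]
  have hdisj : Disjoint (Submodule.span ℝ (Set.range φ)) (Submodule.span ℝ (Set.range ψ)) := by
    rw [hψspan, ← hW]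
    exact hWc.disjoint
  have hsumindep : LinearIndependent ℝ (Sum.elim φ ψ) :=
    LinearIndependent.sum_type hφindep hψindep hdisj
  have hkm : k + m = n := by
    have h1 : Module.finrank ℝ W = k := by
      rw [hW, finrank_span_eq_card hφindep, Fintype.card_fin]
    have h2 : Module.finrank ℝ W + Module.finrank ℝ W' =
        Module.finrank ℝ ((Fin n → ℝ) →ₗ[ℝ] ℝ) :=
      Submodule.finrank_add_eq_of_isCompl hWc
    have h3 : Module.finrank ℝ ((Fin n → ℝ) →ₗ[ℝ] ℝ) = n := by
      have := Subspace.dual_finrank_eq (K := ℝ) (V := Fin n → ℝ)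
      rw [Module.finrank_fin_fun] at this
      exact this
    rw [h1, h3, ← hm] at h2
    exact h2
  set Φ : Fin n → ((Fin n → ℝ) →ₗ[ℝ] ℝ) :=
    fun i => Sum.elim φ ψ (finSumFinEquiv.symm (Fin.cast hkm.symm i)) with hΦ
  have hΦspan : Submodule.span ℝ (Set.range Φ) = ⊤ := by
    have hr : Set.range Φ = Set.range (Sum.elim φ ψ) := by
      apply Function.Surjective.range_comp
      intro s
      exact ⟨Fin.cast hkm (finSumFinEquiv s), by simp⟩
    rw [hr, Set.Sum.elim_range, Submodule.span_union, hψspan, ← hW]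
    exact hWc.sup_eq_top
  set E : (Fin n → ℝ) →ₗ[ℝ] (Fin n → ℝ) := LinearMap.pi Φ with hE
  have hEinj : Function.Injective E := by
    rw [← LinearMap.ker_eq_bot]
    rw [Submodule.eq_bot_iff]
    intro x hx
    have hall : ∀ i, Φ i x = 0 := by
      intro i
      have : E x i = 0 := by rw [(LinearMap.mem_ker).mp hx]; rfl
      simpa [hE, LinearMap.pi_apply] using this
    have hspan : ∀ ψ' ∈ Submodule.span ℝ (Set.range Φ), ψ' x = 0 := by
      intro ψ' hψ'
      induction hψ' using Submodule.span_induction with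
      | mem ψ' h => obtain ⟨i, rfl⟩ := h; exact hall i
      | zero => rfl
      | add a b _ _ iha ihb => simp [LinearMap.add_apply, iha, ihb]
      | smul a ψ' _ ih => simp [LinearMap.smul_apply, ih]
    have hproj : ∀ i : Fin n, (LinearMap.proj i : (Fin n → ℝ) →ₗ[ℝ] ℝ) x = 0 := by
      intro i
      exact hspan _ (by rw [hΦspan]; trivial)
    funext i
    exact hproj i
  have hEsurj : Function.Surjective E := LinearMap.injective_iff_surjective.mp hEinj
  refine ⟨LinearEquiv.ofBijective E ⟨hEinj, hEsurj⟩, ?_⟩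
  intro x i h
  have h1 : (LinearEquiv.ofBijective E ⟨hEinj, hEsurj⟩) x i = Φ i x := rfl
  rw [h1]
  have h2 : finSumFinEquiv.symm (Fin.cast hkm.symm i) = Sum.inl ⟨(i : ℕ), h⟩ := by
    rw [Equiv.symm_apply_eq]
    rw [finSumFinEquiv_apply_left]
    apply Fin.ext
    simp
  show (Sum.elim φ ψ) (finSumFinEquiv.symm (Fin.cast hkm.symm i)) x = _
  rw [h2]
  rfl

end Assembly

section Final

lemma toLex_lt_shift {n : ℕ} (v w z : Fin n → ℝ) (h : toLex v < toLex w) :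
    toLex (v + z) < toLex (w + z) := by
  obtain ⟨i, h1, h2⟩ := h
  refine ⟨i, fun j hj => ?_, ?_⟩
  · show v j + z j = w j + z j
    have h3 := h1 j hj
    rw [show toLex v j = v j from rfl, show toLex w j = w j from rfl] at h3
    rw [h3]
  · show v i + z i < w i + z i
    exact add_lt_add_left h2 (z i)

open OrdAux in
/-- Let `G` be an additive subgroup of `ℚⁿ`, embedded coordinatewise into `ℝⁿ`, and `≻` a
total order (strict total order `r`) on `G`. Then `≻` is compatible with addition if and only
if it is induced by some lexicographic order on `ℝⁿ`: there is a linear automorphism `e` of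
`ℝⁿ` with `a ≻ b ↔ toLex (e a) > toLex (e b)`. -/
theorem rational_subgroup_order_compatible_iff_lex
    {n : ℕ} (G : AddSubgroup (Fin n → ℚ)) (r : G → G → Prop)
    (hord : IsStrictTotalOrder G r) :
    (∀ x y a : G, r x y → r (x + a) (y + a)) ↔
    (∃ e : (Fin n → ℝ) ≃ₗ[ℝ] (Fin n → ℝ),
        ∀ a b : G, r a b ↔
          toLex (e (fun i => ((b : Fin n → ℚ) i : ℝ))) <
            toLex (e (fun i => ((a : Fin n → ℚ) i : ℝ)))) := by
  constructor
  · intro hcomp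
    classical
    obtain ⟨k, u, gv, hA, hB, hC⟩ :=
      main_rec (Module.finrank ℚ (Submodule.span ℚ (G : Set (Fin n → ℚ)))) G r hord hcomp le_rfl
    have hu : LinearIndependent ℝ u :=
      indep_of_triangular u (fun j => embR ((gv j : G) : Fin n → ℚ)) hB hC
    have hkn : k ≤ n := by
      have := hu.fintype_card_le_finrank
      rwa [Module.finrank_fin_fun, Fintype.card_fin] at this
    obtain ⟨e, he⟩ := exists_equiv u hu
    refine ⟨e, fun a b => ?_⟩
    have hembf : ∀ g : G, (fun i => ((g : Fin n → ℚ) i : ℝ)) = embR ((g : G) : Fin n → ℚ) :=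
      fun g => rfl
    rw [hembf a, hembf b]
    set gd : G := a - b with hgd
    have hxg : embR ((gd : G) : Fin n → ℚ)
        = embR ((a : G) : Fin n → ℚ) - embR ((b : G) : Fin n → ℚ) := by
      funext i
      show (((a - b : G) : Fin n → ℚ) i : ℝ)
        = ((a : Fin n → ℚ) i : ℝ) - ((b : Fin n → ℚ) i : ℝ)
      push_cast [Pi.sub_apply]
      simp
    have hrab : r a b ↔ r gd 0 := sub_pos_iff hord hcomp
    rw [hrab, hA gd]
    set v : Fin n → ℝ :=
      e (embR ((a : G) : Fin n → ℚ)) - e (embR ((b : G) : Fin n → ℚ)) with hv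
    have hvap : ∀ i : Fin n,
        v i = e (embR ((a : G) : Fin n → ℚ)) i - e (embR ((b : G) : Fin n → ℚ)) i :=
      fun i => rfl
    have hvE : ∀ (i : Fin n) (h : (i : ℕ) < k),
        v i = u ⟨(i : ℕ), h⟩ ⬝ᵥ embR ((gd : G) : Fin n → ℚ) := by
      intro i h
      rw [hvap i, he _ i h, he _ i h, hxg, dotProduct_sub]
    by_cases hg0 : gd = 0
    · have hvz : embR ((gd : G) : Fin n → ℚ) = 0 := by
        rw [hg0]; funext i; simp [embR]
      have hab : a = b := by
        have := hgd ▸ hg0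
        rwa [sub_eq_zero] at this
      constructor
      · rintro ⟨j, -, hj⟩
        rw [hvz, dotProduct_zero] at hj
        exact absurd hj (lt_irrefl 0)
      · intro hlt
        rw [hab] at hlt
        exact absurd hlt (lt_irrefl _)
    · have hexists : ∃ j : Fin k, u j ⬝ᵥ embR ((gd : G) : Fin n → ℚ) ≠ 0 := by
        rcases @trichotomous _ r hord.toTrichotomous gd 0 with h | h | h
        · obtain ⟨j, -, hj⟩ := (hA gd).mp h
          exact ⟨j, hj.ne'⟩
        · exact absurd h hg0
        · have h2 : r (-gd) 0 := pos_of_neg hord hcomp h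
          obtain ⟨j, -, hj⟩ := (hA (-gd)).mp h2
          refine ⟨j, fun h0 => ?_⟩
          have hembneg : embR (((-gd) : G) : Fin n → ℚ) = - embR ((gd : G) : Fin n → ℚ) := by
            funext i
            show (((-gd : G) : Fin n → ℚ) i : ℝ) = - ((gd : Fin n → ℚ) i : ℝ)
            push_cast [Pi.neg_apply]
            simp
          rw [hembneg, dotProduct_neg, h0, neg_zero] at hj
          exact absurd hj (lt_irrefl 0)
      obtain ⟨j₀, hj₀⟩ := hexists
      have hPex : ∃ i : ℕ, ∃ hin : i < n, v ⟨i, hin⟩ ≠ 0 := by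
        refine ⟨(j₀ : ℕ), lt_of_lt_of_le j₀.2 hkn, ?_⟩
        rw [hvE ⟨(j₀ : ℕ), lt_of_lt_of_le j₀.2 hkn⟩ j₀.2]
        simpa using hj₀
      set i₀ := Nat.find hPex with hi₀def
      obtain ⟨hi₀n, hi₀ne⟩ := Nat.find_spec hPex
      have hmin : ∀ i : ℕ, i < i₀ → ∀ hin : i < n, v ⟨i, hin⟩ = 0 := by
        intro i hi hin
        have := Nat.find_min hPex hi
        push_neg at this
        exact this hin
      have hi₀k : i₀ < k := by
        have h1 : i₀ ≤ (j₀ : ℕ) := Nat.find_min' hPex ⟨lt_of_lt_of_le j₀.2 hkn, by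
          rw [hvE ⟨(j₀ : ℕ), lt_of_lt_of_le j₀.2 hkn⟩ j₀.2]; simpa using hj₀⟩
        omega
      have hL : lexpos u (embR ((gd : G) : Fin n → ℚ)) ↔ 0 < v ⟨i₀, hi₀n⟩ := by
        constructor
        · rintro ⟨j, hall, hj⟩
          have h1 : i₀ ≤ (j : ℕ) := Nat.find_min' hPex ⟨lt_of_lt_of_le j.2 hkn, by
            rw [hvE ⟨(j : ℕ), lt_of_lt_of_le j.2 hkn⟩ j.2]
            simpa using hj.ne'⟩
          have h2 : ¬ (i₀ < (j : ℕ)) := by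
            intro hlt
            have h3 := hall ⟨i₀, hi₀k⟩ hlt
            rw [← hvE ⟨i₀, hi₀n⟩ hi₀k] at h3
            exact hi₀ne h3
          have hj' : j = ⟨i₀, hi₀k⟩ := Fin.ext (show (j:ℕ) = i₀ by omega)
          rw [hj'] at hj
          rw [hvE ⟨i₀, hi₀n⟩ hi₀k]
          exact hj
        · intro h
          refine ⟨⟨i₀, hi₀k⟩, fun i hi => ?_, ?_⟩
          · have h4 : (i : ℕ) < i₀ := hi
            have h5 := hmin (i : ℕ) h4 (lt_of_lt_of_le i.2 hkn)
            rw [hvE ⟨(i : ℕ), lt_of_lt_of_le i.2 hkn⟩ i.2] at h5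
            simpa using h5
          · rw [← hvE ⟨i₀, hi₀n⟩ hi₀k]
            exact h
      have hR : (toLex (e (embR ((b : G) : Fin n → ℚ)))
            < toLex (e (embR ((a : G) : Fin n → ℚ)))) ↔ 0 < v ⟨i₀, hi₀n⟩ := by
        constructor
        · rintro ⟨i, hall, hi⟩
          have hvi : 0 < v i := by
            rw [hvap]
            have h6 : e (embR ((b : G) : Fin n → ℚ)) i
                < e (embR ((a : G) : Fin n → ℚ)) i := hi
            linarith
          have h1 : i₀ ≤ (i : ℕ) := Nat.find_min' hPex ⟨i.2, by
            rw [show (⟨(i : ℕ), i.2⟩ : Fin n) = i from Fin.eta i i.2]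
            exact hvi.ne'⟩
          have h2 : ¬ (i₀ < (i : ℕ)) := by
            intro hlt
            have h3 := hall ⟨i₀, hi₀n⟩ hlt
            have h4 : v ⟨i₀, hi₀n⟩ = 0 := by
              rw [hvap]
              have h7 : e (embR ((b : G) : Fin n → ℚ)) ⟨i₀, hi₀n⟩
                  = e (embR ((a : G) : Fin n → ℚ)) ⟨i₀, hi₀n⟩ := h3
              linarith
            exact hi₀ne h4
          have hieq : i = ⟨i₀, hi₀n⟩ := Fin.ext (show (i:ℕ) = i₀ by omega)
          rw [hieq] at hvi
          exact hvi
        · intro h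
          refine ⟨⟨i₀, hi₀n⟩, fun j hj => ?_, ?_⟩
          · have h4 : (j : ℕ) < i₀ := hj
            have h5 := hmin (j : ℕ) h4 j.2
            rw [show (⟨(j : ℕ), j.2⟩ : Fin n) = j from Fin.eta j j.2] at h5
            rw [hvap] at h5
            show e (embR ((b : G) : Fin n → ℚ)) j = e (embR ((a : G) : Fin n → ℚ)) j
            linarith
          · show e (embR ((b : G) : Fin n → ℚ)) ⟨i₀, hi₀n⟩
              < e (embR ((a : G) : Fin n → ℚ)) ⟨i₀, hi₀n⟩
            rw [hvap ⟨i₀, hi₀n⟩] at h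
            linarith
      rw [hL, hR]
  · rintro ⟨e, he⟩ x y a hxy
    rw [he] at hxy
    rw [he]
    have hembadd : ∀ (p q : G), (fun i => (((p + q : G) : Fin n → ℚ) i : ℝ))
        = (fun i => ((p : Fin n → ℚ) i : ℝ)) + (fun i => ((q : Fin n → ℚ) i : ℝ)) := by
      intro p q; funext i
      show (((p + q : G) : Fin n → ℚ) i : ℝ) = ((p : Fin n → ℚ) i : ℝ) + ((q : Fin n → ℚ) i : ℝ)
      push_cast [Pi.add_apply]
      simp
    rw [hembadd x a, hembadd y a, LinearEquiv.map_add, LinearEquiv.map_add]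
    exact toLex_lt_shift _ _ _ hxy

end Final
end
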